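/- arXiv:1207.4079 — 7 statements merged into one kernel-verified Lean document; each statement's English description precedes it below -/
import Mathlib

section
/- Existence of a splitter-derived covering family: for any finite set U of size n and integers a, b with 0 ≤ a, b ≤ n, there exists a family F of subsets of U of size at most f(min(a,b), a+b) · log n (for some computable function f of the form 2^{O(min(a,b)·log(a+b))}) such that for any two disjoint sets A, B ⊆ U with |A| ≤ a and |B| ≤ b, there exists S ∈ F with A ⊆ S and B ∩ S = ∅. -/
open Finset


/-- two-term binomial lower bound -/
lemma SplF.pow_lower (x y : ℕ) : ∀ s : ℕ, x ^ (s+1) + (s+1) * x ^ s * y ≤ (x + y) ^ (s+1) := by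
  intro s
  induction s with
  | zero => simp [pow_succ]
  | succ s ih =>
      calc x ^ (s+2) + (s+2) * x ^ (s+1) * y
          ≤ (x+y) * (x ^ (s+1) + (s+1) * x ^ s * y) := by ring_nf; nlinarith [Nat.zero_le (x^s*y*y*(s+1))]
        _ ≤ (x+y) * (x+y)^(s+1) := Nat.mul_le_mul_left _ ih
        _ = (x + y) ^ (s+2) := by ring

/-- halving: if s*K ≥ N and K ≤ N then 2(N-K)^s ≤ N^s (s ≥ 1). -/
lemma SplF.halve (N K s : ℕ) (hs : 1 ≤ s) (hK : K ≤ N) (hsK : N ≤ s * K) :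
    2 * (N - K) ^ s ≤ N ^ s := by
  obtain ⟨s, rfl⟩ : ∃ t, s = t + 1 := ⟨s - 1, by omega⟩
  set x := N - K with hx
  have hxy : x + K = N := by omega
  have h1 : 2 * x ^ (s+1) ≤ x ^ (s+1) + (s+1) * x ^ s * K := by
    have hb : s * K + K = (s+1) * K := by ring
    have hx1 : x ≤ (s+1) * K := by omega
    have : x * x ^ s ≤ ((s+1) * K) * x ^ s := Nat.mul_le_mul_right _ hx1
    calc 2 * x ^ (s+1) = x ^ (s+1) + x * x ^ s := by ring
      _ ≤ x ^ (s+1) + (s+1) * K * x ^ s := by omega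
      _ = x ^ (s+1) + (s+1) * x ^ s * K := by ring
  calc 2 * x ^ (s+1) ≤ x ^ (s+1) + (s+1) * x ^ s * K := h1
    _ ≤ (x + K) ^ (s+1) := SplF.pow_lower x K s
    _ = N ^ (s+1) := by rw [hxy]

/-- `(a+b)^a ≤ 4^b a^a` for `1 ≤ a`, `b ≤ a`. -/
lemma SplF.exp_bound (a b : ℕ) (ha : 1 ≤ a) (hba : b ≤ a) :
    (a + b) ^ a ≤ 4 ^ b * a ^ a := by
  have haR : (0:ℝ) < a := by exact_mod_cast ha
  have key : ((a:ℝ) + b) ^ a ≤ 4 ^ b * (a:ℝ) ^ a := by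
    have h1 : (a:ℝ) + b = a * (1 + (b:ℝ)/a) := by field_simp
    have h2 : 1 + (b:ℝ)/a ≤ Real.exp ((b:ℝ)/a) := by
      have := Real.add_one_le_exp ((b:ℝ)/a)
      linarith
    have h3 : ((a:ℝ) + b) ^ a ≤ (a:ℝ)^a * Real.exp ((b:ℝ)/a) ^ a := by
      rw [h1, mul_pow]
      refine mul_le_mul_of_nonneg_left (pow_le_pow_left₀ ?_ h2 a) (by positivity)
      positivity
    have h4 : Real.exp ((b:ℝ)/a) ^ a = Real.exp b := by
      rw [← Real.exp_nat_mul]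
      congr 1
      field_simp
    have h5 : Real.exp (b:ℝ) ≤ 4 ^ b := by
      have : Real.exp (b:ℝ) = Real.exp 1 ^ b := by
        rw [← Real.exp_nat_mul, mul_one]
      rw [this]
      refine pow_le_pow_left₀ (Real.exp_pos 1).le ?_ b
      have := Real.exp_one_lt_d9
      norm_num at this ⊢
      linarith
    calc ((a:ℝ) + b) ^ a ≤ (a:ℝ)^a * Real.exp ((b:ℝ)/a) ^ a := h3
      _ = (a:ℝ)^a * Real.exp b := by rw [h4]
      _ ≤ (a:ℝ)^a * 4 ^ b := by nlinarith [pow_pos haR a]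
      _ = 4 ^ b * (a:ℝ)^a := by ring
  exact_mod_cast key


lemma SplF.card_lt_filter (a b : ℕ) (hb : 1 ≤ b) :
    ((univ : Finset (Fin (a+b))).filter fun v : Fin (a+b) => (v : ℕ) < a).card = a := by
  have ha : a < a + b := by omega
  have he : ((univ : Finset (Fin (a+b))).filter fun v : Fin (a+b) => (v : ℕ) < a)
      = Finset.Iio (⟨a, ha⟩ : Fin (a+b)) := by
    ext v
    simp [Fin.lt_def]
  rw [he, Fin.card_Iio]

lemma SplF.card_ge_filter (a b : ℕ) (hb : 1 ≤ b) :
    ((univ : Finset (Fin (a+b))).filter fun v : Fin (a+b) => a ≤ (v : ℕ)).card = b := by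
  have ha : a < a + b := by omega
  have he : ((univ : Finset (Fin (a+b))).filter fun v : Fin (a+b) => a ≤ (v : ℕ))
      = Finset.Ici (⟨a, ha⟩ : Fin (a+b)) := by
    ext v
    simp [Fin.le_def]
  rw [he, Fin.card_Ici]
  simp

/-- the number of `g : U → Fin (a+b)` splitting a disjoint pair `(A, B)` -/
lemma SplF.count_split {U : Type} [Fintype U] [DecidableEq U] (a b : ℕ)
    (ha : 1 ≤ a) (hb : 1 ≤ b) (A B : Finset U) (hd : Disjoint A B) :
    ((univ : Finset (U → Fin (a+b))).filter fun g =>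
        (∀ x ∈ A, ((g x : ℕ) < a)) ∧ (∀ x ∈ B, a ≤ (g x : ℕ))).card
      = a ^ A.card * b ^ B.card * (a+b) ^ (Fintype.card U - A.card - B.card) := by
  classical
  set c : U → Finset (Fin (a+b)) := fun x =>
    if x ∈ A then (univ.filter fun v : Fin (a+b) => (v : ℕ) < a)
    else if x ∈ B then (univ.filter fun v : Fin (a+b) => a ≤ (v : ℕ))
    else univ with hc
  have hset : ((univ : Finset (U → Fin (a+b))).filter fun g =>
        (∀ x ∈ A, ((g x : ℕ) < a)) ∧ (∀ x ∈ B, a ≤ (g x : ℕ)))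
      = Fintype.piFinset c := by
    ext g
    simp only [mem_filter, mem_univ, true_and, Fintype.mem_piFinset, hc]
    constructor
    · rintro ⟨h1, h2⟩ x
      by_cases hxA : x ∈ A
      · simp [hxA, h1 x hxA]
      · by_cases hxB : x ∈ B
        · simp [hxA, hxB, h2 x hxB]
        · simp [hxA, hxB]
    · intro h
      constructor
      · intro x hx
        have := h x
        simp [hx] at this
        exact this
      · intro x hx
        have hxA : x ∉ A := fun hxA => (Finset.disjoint_left.1 hd) hxA hx
        have := h x
        simp [hx, hxA] at this
        exact this
  rw [hset, Fintype.card_piFinset]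
  rw [← Finset.prod_filter_mul_prod_filter_not univ (· ∈ A)]
  have e1 : ∏ x ∈ univ.filter (· ∈ A), (c x).card = a ^ A.card := by
    rw [Finset.prod_eq_pow_card (b := a)]
    · congr 1
      simp [Finset.filter_mem_eq_inter]
    · intro x hx
      have hxA : x ∈ A := (Finset.mem_filter.1 hx).2
      simp [hc, hxA, SplF.card_lt_filter a b hb]
  rw [e1]
  rw [← Finset.prod_filter_mul_prod_filter_not (univ.filter (· ∉ A)) (· ∈ B)]
  have h21 : (univ.filter (· ∉ A)).filter (· ∈ B) = B := by
    ext x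
    simp only [Finset.mem_filter, Finset.mem_univ, true_and, and_iff_right_iff_imp]
    exact fun hx => Finset.disjoint_right.1 hd hx
  have e2 : ∏ x ∈ (univ.filter (· ∉ A)).filter (· ∈ B), (c x).card = b ^ B.card := by
    rw [Finset.prod_eq_pow_card (b := b), h21]
    intro x hx
    rw [h21] at hx
    have hxA : x ∉ A := Finset.disjoint_right.1 hd hx
    simp [hc, hxA, hx, SplF.card_ge_filter a b hb]
  have e3 : ∏ x ∈ (univ.filter (· ∉ A)).filter (· ∉ B), (c x).card
      = (a+b) ^ (Fintype.card U - A.card - B.card) := by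
    rw [Finset.prod_eq_pow_card (b := a + b)]
    · congr 1
      have h3 : (univ.filter (· ∉ A)).filter (· ∉ B) = (A ∪ B)ᶜ := by
        ext x; simp [not_or]
      rw [h3, Finset.card_compl, Finset.card_union_of_disjoint hd]
      omega
    · intro x hx
      have h' := Finset.mem_filter.1 hx
      have h'' := Finset.mem_filter.1 h'.1
      simp [hc, h''.2, h'.2, Finset.card_univ]
  rw [e2, e3]
  ring


lemma SplF.sum_choose_le (n a : ℕ) :
    ∑ k ∈ Finset.range (a+1), n.choose k ≤ (n+1) ^ a := by
  induction a with
  | zero => simp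
  | succ a ih =>
      rw [Finset.sum_range_succ]
      have h1 : n.choose (a+1) ≤ n ^ (a+1) := Nat.choose_le_pow n (a+1)
      have h2 : n ^ (a+1) ≤ n * (n+1) ^ a := by
        rw [pow_succ']
        exact Nat.mul_le_mul_left n (Nat.pow_le_pow_left (by omega) a)
      have h3 : (n+1) ^ (a+1) = (n+1) ^ a + n * (n+1) ^ a := by ring
      omega

lemma SplF.card_small_sets {U : Type} [Fintype U] [DecidableEq U] (a : ℕ) :
    ((univ : Finset (Finset U)).filter fun A => A.card ≤ a).card
      ≤ (Fintype.card U + 1) ^ a := by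
  have hsub : ((univ : Finset (Finset U)).filter fun A => A.card ≤ a)
      ⊆ (Finset.range (a+1)).biUnion fun k => Finset.powersetCard k univ := by
    intro A hA
    have hA' : A.card ≤ a := (Finset.mem_filter.1 hA).2
    refine Finset.mem_biUnion.2 ⟨A.card, Finset.mem_range.2 (by omega), ?_⟩
    simp [Finset.mem_powersetCard]
  calc ((univ : Finset (Finset U)).filter fun A => A.card ≤ a).card
      ≤ ((Finset.range (a+1)).biUnion fun k => Finset.powersetCard k univ).card :=
        Finset.card_le_card hsub
    _ ≤ ∑ k ∈ Finset.range (a+1), (Finset.powersetCard k (univ : Finset U)).card :=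
        Finset.card_biUnion_le
    _ = ∑ k ∈ Finset.range (a+1), (Fintype.card U).choose k := by
        refine Finset.sum_congr rfl fun k _ => ?_
        rw [Finset.card_powersetCard, Finset.card_univ]
    _ ≤ (Fintype.card U + 1) ^ a := SplF.sum_choose_le _ a


lemma SplF.XK (a' p b' q n' : ℕ) :
    (a'+p) ^ (a'+p) * (b'+q) ^ (b'+q) * (a'+p+(b'+q)) ^ (a'+b'+n')
      ≤ (a'+p+(b'+q)) ^ (a'+p+(b'+q)) * ((a'+p) ^ a' * (b'+q) ^ b' * (a'+p+(b'+q)) ^ n') := by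
  have hA : a'+p ≤ a'+p+(b'+q) := Nat.le_add_right _ _
  have hB : b'+q ≤ a'+p+(b'+q) := Nat.le_add_left _ _
  calc (a'+p) ^ (a'+p) * (b'+q) ^ (b'+q) * (a'+p+(b'+q)) ^ (a'+b'+n')
      = ((a'+p)^a' * (b'+q)^b' * (a'+p+(b'+q))^n') * ((a'+p)^p * (b'+q)^q)
          * ((a'+p+(b'+q))^a' * (a'+p+(b'+q))^b') := by
        rw [pow_add, pow_add, pow_add (a'+p+(b'+q)) (a'+b') n', pow_add (a'+p+(b'+q)) a' b']
        ring
    _ ≤ ((a'+p)^a' * (b'+q)^b' * (a'+p+(b'+q))^n') * ((a'+p+(b'+q))^p * (a'+p+(b'+q))^q)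
          * ((a'+p+(b'+q))^a' * (a'+p+(b'+q))^b') := by
        gcongr
    _ = (a'+p+(b'+q)) ^ (a'+p+(b'+q)) * ((a'+p) ^ a' * (b'+q) ^ b' * (a'+p+(b'+q)) ^ n') := by
        rw [show a'+p+(b'+q) = p + (q + (a' + b')) from by omega]
        rw [pow_add, pow_add, pow_add]
        ring

set_option maxHeartbeats 1000000 in
/-- Existence of a splitter-derived covering family: there is a constant `C` such that
for any finite universe `U` of size `n` and any `a b ≤ n`, there is a family `F` of
subsets of `U` of size at most `2^(C · min a b · log(a+b)) · log n` such that every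
pair of disjoint sets `A, B ⊆ U` with `|A| ≤ a`, `|B| ≤ b` is split by some `S ∈ F`,
i.e. `A ⊆ S` and `B ∩ S = ∅`. -/
theorem splitter_family_exists :
    ∃ C : ℕ, ∀ (U : Type) (_ : Fintype U) (a b : ℕ),
      a ≤ Fintype.card U → b ≤ Fintype.card U →
      ∃ F : Finset (Set U),
        F.card ≤ 2 ^ (C * min a b * (Nat.log 2 (a + b) + 1)) *
          (Nat.log 2 (Fintype.card U) + 1) ∧
        ∀ A B : Set U, Disjoint A B → A.ncard ≤ a → B.ncard ≤ b →
          ∃ S ∈ F, A ⊆ S ∧ Disjoint B S := by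
  refine ⟨5, ?_⟩
  intro U _ a b hab hbb
  classical
  set n := Fintype.card U with hn
  have hpos : 0 < 2 ^ (5 * min a b * (Nat.log 2 (a + b) + 1)) * (Nat.log 2 n + 1) := by
    positivity
  by_cases ha0 : a = 0
  · refine ⟨{(∅ : Set U)}, by rw [Finset.card_singleton]; omega, ?_⟩
    intro A B _ hA _
    refine ⟨∅, Finset.mem_singleton_self _, ?_, by simp⟩
    have : A = ∅ := by
      rw [← Set.ncard_eq_zero A.toFinite]
      omega
    simp [this]
  by_cases hb0 : b = 0
  · refine ⟨{(Set.univ : Set U)}, by rw [Finset.card_singleton]; omega, ?_⟩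
    intro A B _ _ hB
    refine ⟨Set.univ, Finset.mem_singleton_self _, Set.subset_univ A, ?_⟩
    have : B = ∅ := by
      rw [← Set.ncard_eq_zero B.toFinite]
      omega
    simp [this]
  have ha1 : 1 ≤ a := by omega
  have hb1 : 1 ≤ b := by omega
  have hn1 : 1 ≤ n := le_trans ha1 hab
  -- abbreviations
  set m := min a b with hm
  set L := Nat.log 2 (a + b) with hL
  set Ln := Nat.log 2 n with hLn
  set Y := a ^ a * b ^ b with hY
  set X := (a + b) ^ (a + b) with hX
  set s := X / Y + 1 with hs
  set u := (a + b) * (Ln + 1) + 1 with hu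
  set t := s * u with ht
  have hYpos : 0 < Y := by positivity
  set N := (a + b) ^ n with hN
  have hNpos : 0 < N := by positivity
  -- the predicate
  set splits : (U → Fin (a + b)) → Finset U × Finset U → Prop :=
    fun g q => (∀ x ∈ q.1, ((g x : ℕ) < a)) ∧ (∀ x ∈ q.2, a ≤ (g x : ℕ)) with hsplits
  set P : Finset (Finset U × Finset U) :=
    univ.filter fun q => Disjoint q.1 q.2 ∧ q.1.card ≤ a ∧ q.2.card ≤ b with hP
  set K : Finset U × Finset U → ℕ :=
    fun q => ((univ : Finset (U → Fin (a + b))).filter fun g => splits g q).card with hK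
  have hNcard : Fintype.card (U → Fin (a + b)) = N := by
    rw [Fintype.card_fun, Fintype.card_fin, hN, hn]
  -- key facts about K
  have hKle : ∀ q, K q ≤ N := by
    intro q
    calc K q ≤ (univ : Finset (U → Fin (a + b))).card := Finset.card_filter_le _ _
      _ = N := by rw [Finset.card_univ, hNcard]
  have hKform : ∀ q ∈ P, K q = a ^ q.1.card * b ^ q.2.card * (a + b) ^ (n - q.1.card - q.2.card) := by
    intro q hq
    rw [hP, Finset.mem_filter] at hq
    exact SplF.count_split a b ha1 hb1 q.1 q.2 hq.2.1
  have hsK : ∀ q ∈ P, N ≤ s * K q := by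
    intro q hq
    have hq' := hq
    rw [hP, Finset.mem_filter] at hq'
    obtain ⟨-, hdisj, hqa, hqb⟩ := hq'
    have hcards : q.1.card + q.2.card ≤ n := by
      have := Finset.card_le_univ (q.1 ∪ q.2)
      rwa [Finset.card_union_of_disjoint hdisj] at this
    -- X * K q ≥ Y * N
    have hXK : Y * N ≤ X * K q := by
      obtain ⟨p, hp⟩ : ∃ p, a = q.1.card + p := ⟨a - q.1.card, by omega⟩
      obtain ⟨r, hr⟩ : ∃ r, b = q.2.card + r := ⟨b - q.2.card, by omega⟩
      obtain ⟨n', hn'⟩ : ∃ n', n = q.1.card + q.2.card + n' := ⟨n - q.1.card - q.2.card, by omega⟩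
      have hn'' : n - q.1.card - q.2.card = n' := by omega
      rw [hKform q hq, hY, hX, hN, hn'', hp, hr, hn']
      exact SplF.XK q.1.card p q.2.card r n'
    -- s * Y > X
    have hsY : X + 1 ≤ s * Y := by
      have h1 := Nat.div_add_mod X Y
      have h2 := Nat.mod_lt X hYpos
      rw [hs]
      have : (X / Y + 1) * Y = Y * (X / Y) + Y := by ring
      omega
    have h3 : N * Y ≤ (s * K q) * Y := by
      calc N * Y = Y * N := by ring
        _ ≤ X * K q := hXK
        _ ≤ (s * Y) * K q := by
            have := Nat.mul_le_mul_right (K q) (le_trans (Nat.le_succ X) hsY)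
            exact this
        _ = (s * K q) * Y := by ring
    exact Nat.le_of_mul_le_mul_right h3 hYpos
  -- bound on s
  have hXY : X ≤ Y * (4 ^ m * (a + b) ^ m) := by
    rcases Nat.le_total b a with hba | hab'
    · have hmb : m = b := by rw [hm]; omega
      have h1 : (a + b) ^ a ≤ 4 ^ b * a ^ a := SplF.exp_bound a b ha1 hba
      rw [hmb, hX, hY, pow_add]
      calc (a + b) ^ a * (a + b) ^ b ≤ (4 ^ b * a ^ a) * (a + b) ^ b :=
            Nat.mul_le_mul_right _ h1
        _ = (a ^ a * 1) * (4 ^ b * (a + b) ^ b) := by ring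
        _ ≤ (a ^ a * b ^ b) * (4 ^ b * (a + b) ^ b) := by
            have hbb1 : 1 ≤ b ^ b := Nat.one_le_pow _ _ hb1
            exact Nat.mul_le_mul_right _ (Nat.mul_le_mul_left _ hbb1)
    · have hma : m = a := by rw [hm]; omega
      have h1 : (b + a) ^ b ≤ 4 ^ a * b ^ b := SplF.exp_bound b a hb1 hab'
      rw [hma, hX, hY, pow_add]
      have hcomm : (a + b) ^ b = (b + a) ^ b := by rw [Nat.add_comm]
      calc (a + b) ^ a * (a + b) ^ b = (a + b) ^ b * (a + b) ^ a := by ring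
        _ = (b + a) ^ b * (a + b) ^ a := by rw [hcomm]
        _ ≤ (4 ^ a * b ^ b) * (a + b) ^ a := Nat.mul_le_mul_right _ h1
        _ = (1 * b ^ b) * (4 ^ a * (a + b) ^ a) := by ring
        _ ≤ (a ^ a * b ^ b) * (4 ^ a * (a + b) ^ a) := by
            have haa1 : 1 ≤ a ^ a := Nat.one_le_pow _ _ ha1
            exact Nat.mul_le_mul_right _ (Nat.mul_le_mul_right _ haa1)
  have habL : a + b < 2 ^ (L + 1) := by
    rw [hL]
    exact Nat.lt_pow_succ_log_self (by norm_num) (a + b)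
  have hm1 : 1 ≤ m := by rw [hm]; omega
  have hsle : s ≤ 2 ^ (4 * m * (L + 1)) := by
    have h1 : X / Y ≤ 4 ^ m * (a + b) ^ m := by
      calc X / Y ≤ (Y * (4 ^ m * (a + b) ^ m)) / Y := Nat.div_le_div_right hXY
        _ = 4 ^ m * (a + b) ^ m := Nat.mul_div_cancel_left _ hYpos
    have h2 : 4 ^ m * (a + b) ^ m ≤ 2 ^ (2 * m) * 2 ^ ((L + 1) * m) := by
      have e4 : (4 : ℕ) ^ m = 2 ^ (2 * m) := by
        rw [show (4 : ℕ) = 2 ^ 2 from rfl, ← pow_mul]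
      rw [e4]
      refine Nat.mul_le_mul_left _ ?_
      calc (a + b) ^ m ≤ (2 ^ (L + 1)) ^ m := Nat.pow_le_pow_left (le_of_lt habL) m
        _ = 2 ^ ((L + 1) * m) := by rw [← pow_mul]
    have h3 : 2 ^ (2 * m) * 2 ^ ((L + 1) * m) = 2 ^ (2 * m + (L + 1) * m) := by
      rw [← pow_add]
    have h4 : 2 * m + (L + 1) * m ≤ 3 * m * (L + 1) := by nlinarith
    have h5 : X / Y ≤ 2 ^ (3 * m * (L + 1)) := by
      calc X / Y ≤ 2 ^ (2 * m + (L + 1) * m) := by omega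
        _ ≤ 2 ^ (3 * m * (L + 1)) := Nat.pow_le_pow_right (by norm_num) h4
    have h6 : 3 * m * (L + 1) + 1 ≤ 4 * m * (L + 1) := by nlinarith
    calc s = X / Y + 1 := hs
      _ ≤ 2 ^ (3 * m * (L + 1)) + 2 ^ (3 * m * (L + 1)) := by
          have : 1 ≤ 2 ^ (3 * m * (L + 1)) := Nat.one_le_two_pow
          omega
      _ = 2 ^ (3 * m * (L + 1) + 1) := by rw [pow_succ]; ring
      _ ≤ 2 ^ (4 * m * (L + 1)) := Nat.pow_le_pow_right (by norm_num) h6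
  -- bound on |P|
  have hPcard : P.card < 2 ^ u := by
    have h1 : P ⊆ (univ.filter fun A : Finset U => A.card ≤ a) ×ˢ
        (univ.filter fun B : Finset U => B.card ≤ b) := by
      intro q hq
      rw [hP, Finset.mem_filter] at hq
      rw [Finset.mem_product]
      constructor <;> simp [hq.2.2.1, hq.2.2.2]
    have h2 : P.card ≤ (n + 1) ^ a * (n + 1) ^ b := by
      calc P.card ≤ _ := Finset.card_le_card h1
        _ = (univ.filter fun A : Finset U => A.card ≤ a).card *
            (univ.filter fun B : Finset U => B.card ≤ b).card := Finset.card_product _ _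
        _ ≤ (n + 1) ^ a * (n + 1) ^ b :=
            Nat.mul_le_mul (SplF.card_small_sets a) (SplF.card_small_sets b)
    have h3 : (n + 1) ^ a * (n + 1) ^ b = (n + 1) ^ (a + b) := by rw [pow_add]
    have h4 : n + 1 ≤ 2 ^ (Ln + 1) := Nat.lt_pow_succ_log_self (by norm_num) n
    have h5 : (n + 1) ^ (a + b) ≤ 2 ^ ((Ln + 1) * (a + b)) := by
      calc (n + 1) ^ (a + b) ≤ (2 ^ (Ln + 1)) ^ (a + b) := Nat.pow_le_pow_left h4 _
        _ = 2 ^ ((Ln + 1) * (a + b)) := by rw [← pow_mul]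
    have h6 : (Ln + 1) * (a + b) < u := by rw [hu]; nlinarith
    calc P.card ≤ (n + 1) ^ (a + b) := by omega
      _ ≤ 2 ^ ((Ln + 1) * (a + b)) := h5
      _ < 2 ^ u := Nat.pow_lt_pow_right (by norm_num) h6
  -- bad tuples
  set Bad : Finset (Fin t → U → Fin (a + b)) :=
    univ.filter fun G => ∃ q ∈ P, ∀ i, ¬ splits (G i) q with hBad
  have hBadCard : Bad.card < N ^ t := by
    have hsub : Bad ⊆ P.biUnion fun q =>
        Fintype.piFinset fun _ : Fin t => univ.filter fun g => ¬ splits g q := by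
      intro G hG
      rw [hBad, Finset.mem_filter] at hG
      obtain ⟨-, q, hqP, hGq⟩ := hG
      refine Finset.mem_biUnion.2 ⟨q, hqP, ?_⟩
      rw [Fintype.mem_piFinset]
      intro i
      simp [hGq i]
    have hterm : ∀ q ∈ P, 2 ^ u * ((univ.filter fun g => ¬ splits g q).card) ^ t ≤ N ^ t := by
      intro q hqP
      have hcompl : (univ.filter fun g => ¬ splits g q).card = N - K q := by
        have := Finset.card_filter_add_card_filter_not
          (s := (univ : Finset (U → Fin (a + b)))) (p := fun g => splits g q)
        rw [Finset.card_univ, hNcard] at this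
        simp only [hK]
        omega
      rw [hcompl]
      have hhalf : 2 * (N - K q) ^ s ≤ N ^ s :=
        SplF.halve N (K q) s (by rw [hs]; exact Nat.le_add_left 1 _) (hKle q) (hsK q hqP)
      calc 2 ^ u * ((N - K q) ^ t) = (2 * (N - K q) ^ s) ^ u := by
            rw [ht, mul_pow, ← pow_mul]
        _ ≤ (N ^ s) ^ u := Nat.pow_le_pow_left hhalf u
        _ = N ^ t := by rw [← pow_mul, ht]
    have h1 : 2 ^ u * Bad.card ≤ 2 ^ u * ∑ q ∈ P,
        ((univ.filter fun g => ¬ splits g q).card) ^ t := by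
      refine Nat.mul_le_mul_left _ ?_
      calc Bad.card ≤ (P.biUnion fun q =>
            Fintype.piFinset fun _ : Fin t => univ.filter fun g => ¬ splits g q).card :=
            Finset.card_le_card hsub
        _ ≤ ∑ q ∈ P, (Fintype.piFinset fun _ : Fin t =>
            univ.filter fun g => ¬ splits g q).card := Finset.card_biUnion_le
        _ = ∑ q ∈ P, ((univ.filter fun g => ¬ splits g q).card) ^ t := by
            refine Finset.sum_congr rfl fun q _ => ?_
            rw [Fintype.card_piFinset_const]
    have h2 : 2 ^ u * ∑ q ∈ P, ((univ.filter fun g => ¬ splits g q).card) ^ t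
        ≤ P.card * N ^ t := by
      rw [Finset.mul_sum]
      calc ∑ q ∈ P, 2 ^ u * ((univ.filter fun g => ¬ splits g q).card) ^ t
          ≤ ∑ q ∈ P, N ^ t := Finset.sum_le_sum hterm
        _ = P.card * N ^ t := by rw [Finset.sum_const, smul_eq_mul]
    have h3 : P.card * N ^ t < 2 ^ u * N ^ t :=
      Nat.mul_lt_mul_of_lt_of_le hPcard (le_refl _) (by positivity)
    have := lt_of_le_of_lt (le_trans h1 h2) h3
    exact Nat.lt_of_mul_lt_mul_left this
  -- a good tuple exists
  have hex : ∃ G : Fin t → U → Fin (a + b), ∀ q ∈ P, ∃ i, splits (G i) q := by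
    have hcardF : Fintype.card (Fin t → U → Fin (a + b)) = N ^ t := by
      rw [Fintype.card_fun, hNcard, Fintype.card_fin]
    have hcard : Bad.card < Fintype.card (Fin t → U → Fin (a + b)) := by
      rw [hcardF]; exact hBadCard
    have hne : (Badᶜ : Finset (Fin t → U → Fin (a + b))).Nonempty := by
      rw [← Finset.card_pos, Finset.card_compl]
      omega
    obtain ⟨G, hGmem⟩ := hne
    have hG : G ∉ Bad := Finset.mem_compl.1 hGmem
    refine ⟨G, ?_⟩
    intro q hqP
    by_contra hcon
    push_neg at hcon
    exact hG (by
      rw [hBad, Finset.mem_filter]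
      exact ⟨Finset.mem_univ _, q, hqP, hcon⟩)
  obtain ⟨G, hG⟩ := hex
  -- the family
  refine ⟨Finset.image (fun i : Fin t => {x : U | ((G i) x : ℕ) < a}) univ, ?_, ?_⟩
  · -- cardinality
    have h1 : (Finset.image (fun i : Fin t => {x : U | ((G i) x : ℕ) < a}) univ).card ≤ t := by
      calc _ ≤ (univ : Finset (Fin t)).card := Finset.card_image_le
        _ = t := by rw [Finset.card_univ, Fintype.card_fin]
    have h2 : u ≤ 2 ^ (m * (L + 1)) * (Ln + 1) := by
      have e1 : u ≤ (a + b + 1) * (Ln + 1) := by rw [hu]; nlinarith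
      have e2 : a + b + 1 ≤ 2 ^ (L + 1) := by omega
      have e3 : 2 ^ (L + 1) ≤ 2 ^ (m * (L + 1)) :=
        Nat.pow_le_pow_right (by norm_num) (by nlinarith)
      calc u ≤ (a + b + 1) * (Ln + 1) := e1
        _ ≤ 2 ^ (L + 1) * (Ln + 1) := Nat.mul_le_mul_right _ e2
        _ ≤ 2 ^ (m * (L + 1)) * (Ln + 1) := Nat.mul_le_mul_right _ e3
    have h3 : t ≤ 2 ^ (5 * m * (L + 1)) * (Ln + 1) := by
      calc t = s * u := ht
        _ ≤ 2 ^ (4 * m * (L + 1)) * (2 ^ (m * (L + 1)) * (Ln + 1)) :=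
            Nat.mul_le_mul hsle h2
        _ = 2 ^ (4 * m * (L + 1) + m * (L + 1)) * (Ln + 1) := by
            rw [pow_add]; ring
        _ = 2 ^ (5 * m * (L + 1)) * (Ln + 1) := by
            congr 2
            ring
    exact le_trans h1 h3
  · -- the splitting property
    intro A B hd hA hB
    have hAfin : A.Finite := A.toFinite
    have hBfin : B.Finite := B.toFinite
    set Af := hAfin.toFinset with hAf
    set Bf := hBfin.toFinset with hBf
    have hq : (Af, Bf) ∈ P := by
      rw [hP, Finset.mem_filter]
      refine ⟨Finset.mem_univ _, ?_, ?_, ?_⟩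
      · rw [Finset.disjoint_left]
        intro x hx1 hx2
        rw [hAf, Set.Finite.mem_toFinset] at hx1
        rw [hBf, Set.Finite.mem_toFinset] at hx2
        exact Set.disjoint_left.1 hd hx1 hx2
      · rw [hAf, ← Set.ncard_eq_toFinset_card A hAfin]; exact hA
      · rw [hBf, ← Set.ncard_eq_toFinset_card B hBfin]; exact hB
    obtain ⟨i, hi⟩ := hG (Af, Bf) hq
    refine ⟨{x : U | ((G i) x : ℕ) < a}, Finset.mem_image.2 ⟨i, Finset.mem_univ _, rfl⟩, ?_, ?_⟩
    · intro x hx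
      have hx' : x ∈ Af := by rw [hAf, Set.Finite.mem_toFinset]; exact hx
      exact hi.1 x hx'
    · rw [Set.disjoint_left]
      intro x hx hxS
      have hx' : x ∈ Bf := by rw [hBf, Set.Finite.mem_toFinset]; exact hx
      have := hi.2 x hx'
      rw [Set.mem_setOf_eq] at hxS
      omega
end

section
/- A naive k-fold spanning-forest sparsification preserves high connectivity: given an undirected graph G = (V, E) and an integer k, if E₀ ⊆ E is constructed by iterating k+1 times the operation of adding the edges of a spanning forest of the current graph to E₀ and deleting them from the graph, then |E₀| ≤ (k+1)(|V| − 1), and for every edge uv ∈ E \ E₀, the graph (V, E₀) contains at least k+1 pairwise edge-disjoint paths between u and v. -/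
/-!
Each forest `F i` is a spanning forest of `G` minus the earlier forests, so the forests are
pairwise edge-disjoint and each has at most `|V| - 1` edges. An edge `uv` of `G` missed by all
of them survives in every intermediate graph, and a spanning forest has the same reachability
relation as the graph it spans; so every `F i` contains a `u`–`v` path, and these `k + 1` paths
are edge-disjoint.
-/

/-- `F` is a spanning forest of `H`: a maximal acyclic subgraph (on the same vertex set). -/
def IsSpanningForest {V : Type*} (H F : SimpleGraph V) : Prop :=
  F ≤ H ∧ F.IsAcyclic ∧ ∀ F' : SimpleGraph V, F ≤ F' → F' ≤ H → F'.IsAcyclic → F' = F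

open SimpleGraph

section

variable {V : Type*}

lemma IsSpanningForest.maximal {H F : SimpleGraph V} (hF : IsSpanningForest H F) :
    Maximal (fun F' ↦ F' ≤ H ∧ F'.IsAcyclic) F :=
  ⟨⟨hF.1, hF.2.1⟩, fun F' hF' hle ↦ (hF.2.2 F' hle hF'.1 hF'.2).le⟩

lemma IsSpanningForest.reachable_of_adj {H F : SimpleGraph V} (hF : IsSpanningForest H F)
    {u v : V} (huv : H.Adj u v) : F.Reachable u v := by
  rw [H.reachable_eq_of_maximal_isAcyclic F hF.maximal]
  exact huv.reachable

lemma SimpleGraph.IsAcyclic.ncard_edgeSet_le [Fintype V] {F : SimpleGraph V}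
    (hF : F.IsAcyclic) : F.edgeSet.ncard ≤ Fintype.card V - 1 := by
  cases isEmpty_or_nonempty V
  · simp [Set.eq_empty_of_isEmpty F.edgeSet]
  classical
  -- extend `F` to a spanning tree of the complete graph
  obtain ⟨T, hFT, -, hT⟩ := connected_top.exists_isTree_le_of_le_of_isAcyclic le_top hF
  have hcard := hT.card_edgeFinset
  calc F.edgeSet.ncard ≤ T.edgeSet.ncard := Set.ncard_le_ncard (edgeSet_mono hFT)
    _ = Fintype.card V - 1 := by rw [← coe_edgeFinset, Set.ncard_coe_finset]; omega

lemma SimpleGraph.exists_edgeDisjoint_paths {ι : Type*} {G : SimpleGraph V}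
    {F : ι → SimpleGraph V} (hle : ∀ i, F i ≤ G)
    (hdisj : Pairwise fun i j ↦ Disjoint (F i).edgeSet (F j).edgeSet) {u v : V}
    (hreach : ∀ i, (F i).Reachable u v) :
    ∃ P : ι → G.Walk u v, (∀ i, (P i).IsPath) ∧
      ∀ i j, i ≠ j → ∀ e ∈ (P i).edges, e ∉ (P j).edges := by
  choose p hp using fun i ↦ (hreach i).exists_isPath
  refine ⟨fun i ↦ (p i).mapLe (hle i), fun i ↦ (hp i).mapLe (hle i), fun i j hij e hi hj ↦ ?_⟩
  rw [Walk.edges_mapLe_eq_edges] at hi hj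
  exact Set.disjoint_left.1 (hdisj hij) ((p i).edges_subset_edgeSet hi)
    ((p j).edges_subset_edgeSet hj)

section IteratedForests

variable {ι : Type*} [LinearOrder ι] {G : SimpleGraph V} {F : ι → SimpleGraph V}

lemma pairwise_disjoint_edgeSet_of_le_deleteEdges
    (hle : ∀ i, F i ≤ G.deleteEdges (⋃ j ∈ Set.Iio i, (F j).edgeSet)) :
    Pairwise fun i j ↦ Disjoint (F i).edgeSet (F j).edgeSet := by
  suffices h : ∀ i j, j < i → Disjoint (F i).edgeSet (F j).edgeSet from
    fun i j hij ↦ hij.lt_or_gt.elim (fun hlt ↦ (h j i hlt).symm) (h i j)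
  intro i j hji
  refine Set.disjoint_left.2 fun e hi hj ↦ ?_
  have he := edgeSet_mono (hle i) hi
  rw [edgeSet_deleteEdges] at he
  exact he.2 (Set.mem_biUnion hji hj)

lemma reachable_of_adj_of_notMem_iUnion_edgeSet
    (hF : ∀ i, IsSpanningForest (G.deleteEdges (⋃ j ∈ Set.Iio i, (F j).edgeSet)) (F i))
    {u v : V} (huv : G.Adj u v) (hnot : s(u, v) ∉ ⋃ i, (F i).edgeSet) (i : ι) :
    (F i).Reachable u v := by
  refine (hF i).reachable_of_adj ((deleteEdges_adj ..).2 ⟨huv, fun hmem ↦ hnot ?_⟩)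
  obtain ⟨j, -, hj⟩ := Set.mem_iUnion₂.1 hmem
  exact Set.mem_iUnion.2 ⟨j, hj⟩

end IteratedForests

end

/-- Iterating `k+1` times the operation of taking a spanning forest of the current graph,
adding its edges to `E₀` and deleting them from the graph, yields an edge set `E₀` with
`|E₀| ≤ (k+1)(|V|-1)` such that every edge of `G` outside `E₀` has `k+1` pairwise
edge-disjoint paths between its endpoints in the graph `(V, E₀)`. -/
theorem sparsification_preserves_connectivity {V : Type*} [Fintype V]
    (G : SimpleGraph V) (k : ℕ) (F : Fin (k + 1) → SimpleGraph V)
    (hF : ∀ i : Fin (k + 1),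
      IsSpanningForest (G.deleteEdges (⋃ j ∈ Set.Iio i, (F j).edgeSet)) (F i)) :
    (⋃ i, (F i).edgeSet).ncard ≤ (k + 1) * (Fintype.card V - 1) ∧
    ∀ u v : V, G.Adj u v → s(u, v) ∉ ⋃ i, (F i).edgeSet →
      ∃ P : Fin (k + 1) → (SimpleGraph.fromEdgeSet (⋃ i, (F i).edgeSet)).Walk u v,
        (∀ i, (P i).IsPath) ∧
        ∀ i j, i ≠ j → ∀ e ∈ (P i).edges, e ∉ (P j).edges := by
  constructor
  · calc (⋃ i, (F i).edgeSet).ncard ≤ ∑ i, (F i).edgeSet.ncard :=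
          Set.ncard_iUnion_le_of_fintype _
      _ ≤ ∑ _i : Fin (k + 1), (Fintype.card V - 1) :=
          Finset.sum_le_sum fun i _ ↦ (hF i).2.1.ncard_edgeSet_le
      _ = (k + 1) * (Fintype.card V - 1) := by simp
  · intro u v huv hnot
    have hle : ∀ i, F i ≤ fromEdgeSet (⋃ i, (F i).edgeSet) := fun i _ _ hadj ↦
      (fromEdgeSet_adj _).2 ⟨Set.mem_iUnion.2 ⟨i, hadj⟩, hadj.ne⟩
    exact exists_edgeDisjoint_paths hle
      (pairwise_disjoint_edgeSet_of_le_deleteEdges fun i ↦ (hF i).1)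
      (reachable_of_adj_of_notMem_iUnion_edgeSet hF huv hnot)
end

section
/- Component count bound in graphs without good node separations or flower separations: if a connected graph G with undeletable vertices V∞ ⊆ V(G) and border terminals T_b ⊆ V(G) contains no (q,k)-good node separation and no (q,k)-flower separation with respect to T_b, then for any Z ⊆ V(G) \ V∞ of size at most k, the graph G \ Z contains at most (2q+2)(2^k − 1) + |T_b| + 1 connected components containing a vertex of V(G) \ V∞, out of which at most one has more than q vertices not in V∞. -/
variable {V : Type*}

/-- The vertex sets of the connected components of `G \ Z` (the induced subgraph on the
complement of `Z`), viewed as subsets of `V`. -/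
def comps (G : SimpleGraph V) (Z : Set V) : Set (Set V) :=
  {C | ∃ D : (G.induce Zᶜ).ConnectedComponent, C = Subtype.val '' D.supp}

/-- The (open) neighborhood of a vertex set `W` in `G`. -/
def setNbhd (G : SimpleGraph V) (W : Set V) : Set V :=
  {v | v ∉ W ∧ ∃ w ∈ W, G.Adj v w}

/-- A `(q,k)`-good node separation of `G` with undeletable vertices `Vinf`:
a set `Z` of at most `k` deletable vertices together with two different connected
components of `G \ Z`, each having more than `q` vertices outside `Vinf`. -/
def GoodNodeSeparation (G : SimpleGraph V) (Vinf : Set V) (q k : ℕ)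
    (Z V₁ V₂ : Set V) : Prop :=
  Z.ncard ≤ k ∧ Z ∩ Vinf = ∅ ∧
  V₁ ∈ comps G Z ∧ V₂ ∈ comps G Z ∧ V₁ ≠ V₂ ∧
  q < (V₁ \ Vinf).ncard ∧ q < (V₂ \ Vinf).ncard

/-- A `(q,k)`-flower separation in `G` with respect to border terminals `Tb`:
a nonempty core `Z` of at most `k` deletable vertices and a family `P` of petals,
each a connected component of `G \ Z` disjoint from `Tb` with at most `q` vertices
outside `Vinf` and neighborhood exactly `Z`; the stalk has more than `q` vertices
outside `Vinf`, and so does the union of the petals. -/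
def FlowerSeparation (G : SimpleGraph V) (Vinf Tb : Set V) (q k : ℕ)
    (Z : Set V) (P : Set (Set V)) : Prop :=
  1 ≤ Z.ncard ∧ Z.ncard ≤ k ∧ Z ∩ Vinf = ∅ ∧
  P ⊆ comps G Z ∧
  q < (((Set.univ : Set V) \ (Z ∪ ⋃₀ P)) \ Vinf).ncard ∧
  (∀ Vi ∈ P, Vi ∩ Tb = ∅ ∧ (Vi \ Vinf).ncard ≤ q ∧ setNbhd G Vi = Z) ∧
  q < ((⋃₀ P) \ Vinf).ncard

lemma comps_nonempty {G : SimpleGraph V} {Z : Set V} {C : Set V} (hC : C ∈ comps G Z) :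
    C.Nonempty := by
  obtain ⟨D, rfl⟩ := hC
  obtain ⟨v, hv⟩ := D.exists_rep
  exact ⟨v.1, ⟨v, hv, rfl⟩⟩

lemma comps_subset_compl {G : SimpleGraph V} {Z : Set V} {C : Set V} (hC : C ∈ comps G Z) :
    C ⊆ Zᶜ := by
  obtain ⟨D, rfl⟩ := hC
  rintro x ⟨⟨x, hx⟩, -, rfl⟩
  exact hx

lemma comps_disjoint {G : SimpleGraph V} {Z : Set V} {C C' : Set V} (hC : C ∈ comps G Z)
    (hC' : C' ∈ comps G Z) (hne : C ≠ C') : Disjoint C C' := by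
  obtain ⟨D, rfl⟩ := hC
  obtain ⟨D', rfl⟩ := hC'
  rw [Set.disjoint_left]
  rintro x ⟨a, ha, rfl⟩ ⟨b, hb, hba⟩
  have hab : a = b := Subtype.ext hba.symm
  subst hab
  apply hne
  rw [SimpleGraph.ConnectedComponent.mem_supp_iff] at ha hb
  rw [← ha, ← hb]

lemma comps_closed {G : SimpleGraph V} {Z : Set V} {C : Set V} (hC : C ∈ comps G Z)
    {x y : V} (hx : x ∈ C) (hadj : G.Adj x y) (hy : y ∉ Z) : y ∈ C := by
  obtain ⟨D, rfl⟩ := hC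
  obtain ⟨⟨x, hxZ⟩, hxD, rfl⟩ := hx
  refine ⟨⟨y, hy⟩, ?_, rfl⟩
  rw [SimpleGraph.ConnectedComponent.mem_supp_iff] at hxD ⊢
  rw [← hxD]
  exact SimpleGraph.ConnectedComponent.connectedComponentMk_eq_of_adj (by simpa using hadj.symm)

lemma setNbhd_subset {G : SimpleGraph V} {Z : Set V} {C : Set V} (hC : C ∈ comps G Z) :
    setNbhd G C ⊆ Z := by
  rintro v ⟨hvC, w, hw, hadj⟩
  by_contra hvZ
  exact hvC (comps_closed hC hw hadj.symm hvZ)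

lemma exists_exit_edge {G : SimpleGraph V} {C : Set V} {a b : V} (p : G.Walk a b)
    (ha : a ∈ C) (hb : b ∉ C) : ∃ x y, x ∈ C ∧ y ∉ C ∧ G.Adj x y := by
  induction p with
  | nil => exact absurd ha hb
  | @cons u v w hadj q ih =>
    by_cases hv : v ∈ C
    · exact ih hv hb
    · exact ⟨u, v, ha, hv, hadj⟩

lemma setNbhd_nonempty {G : SimpleGraph V} (hG : G.Connected) {Z : Set V} (hZ : Z.Nonempty)
    {C : Set V} (hC : C ∈ comps G Z) : (setNbhd G C).Nonempty := by
  obtain ⟨c, hc⟩ := comps_nonempty hC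
  obtain ⟨z, hz⟩ := hZ
  have hzC : z ∉ C := fun h => comps_subset_compl hC h hz
  obtain ⟨p⟩ := hG.preconnected c z
  obtain ⟨x, y, hx, hy, hadj⟩ := exists_exit_edge p hc hzC
  exact ⟨y, hy, x, hx, hadj.symm⟩

lemma mem_comps_of {G : SimpleGraph V} {Z Z' : Set V} {C : Set V} (hC : C ∈ comps G Z)
    (hZ' : Z' ⊆ Z) (hN : setNbhd G C ⊆ Z') : C ∈ comps G Z' := by
  have hle : (Zᶜ : Set V) ⊆ Z'ᶜ := Set.compl_subset_compl.2 hZ'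
  obtain ⟨c, hc⟩ := comps_nonempty hC
  have hcZ' : c ∈ (Z'ᶜ : Set V) := hle (comps_subset_compl hC hc)
  refine ⟨(G.induce Z'ᶜ).connectedComponentMk ⟨c, hcZ'⟩, ?_⟩
  have hclosed : ∀ {u w : ↥(Z'ᶜ : Set V)} (p : (G.induce Z'ᶜ).Walk u w), ↑u ∈ C → ↑w ∈ C := by
    intro u w p
    induction p with
    | nil => exact id
    | @cons a b w hadj q ih =>
      intro haC
      refine ih ?_
      by_contra hbC
      have : (b : V) ∈ setNbhd G C := ⟨hbC, a, haC, by simpa using hadj.symm⟩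
      exact b.2 (hN this)
  have hmap : ∀ {u w : ↥(Zᶜ : Set V)} (p : (G.induce Zᶜ).Walk u w),
      (G.induce Z'ᶜ).Reachable ⟨u.1, hle u.2⟩ ⟨w.1, hle w.2⟩ := by
    intro u w p
    induction p with
    | nil => exact SimpleGraph.Reachable.refl _
    | @cons a b w hadj q ih =>
      refine SimpleGraph.Reachable.trans (SimpleGraph.Adj.reachable ?_) ih
      simpa using hadj
  ext x
  constructor
  · intro hx
    obtain ⟨D, hCD⟩ := hC
    rw [hCD] at hx hc
    obtain ⟨x', hx', rfl⟩ := hx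
    obtain ⟨c', hc', hcc⟩ := hc
    rw [SimpleGraph.ConnectedComponent.mem_supp_iff] at hx' hc'
    obtain ⟨p⟩ := SimpleGraph.ConnectedComponent.exact (hx'.trans hc'.symm)
    refine ⟨⟨x'.1, hle x'.2⟩, ?_, rfl⟩
    rw [SimpleGraph.ConnectedComponent.mem_supp_iff]
    have h1 := SimpleGraph.ConnectedComponent.sound (hmap p)
    rw [h1]
    congr 1
    exact Subtype.ext hcc
  · rintro ⟨x', hx', rfl⟩
    rw [SimpleGraph.ConnectedComponent.mem_supp_iff] at hx'
    obtain ⟨p⟩ := (SimpleGraph.ConnectedComponent.exact hx').symm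
    exact hclosed p hc

lemma card_le_of_points {𝒞 : Set (Set V)} {T : Set V} (hT : T.Finite)
    (hdisj : ∀ C ∈ 𝒞, ∀ C' ∈ 𝒞, C ≠ C' → Disjoint C C')
    (h : ∀ C ∈ 𝒞, ∃ x, x ∈ T ∧ x ∈ C) : 𝒞.ncard ≤ T.ncard := by
  classical
  rcases 𝒞.eq_empty_or_nonempty with rfl | ⟨C₀, hC₀⟩
  · simp
  obtain ⟨x₀, -, -⟩ := h C₀ hC₀
  set f : Set V → V := fun C => if hc : ∃ x, x ∈ T ∧ x ∈ C then hc.choose else x₀ with hf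
  apply Set.ncard_le_ncard_of_injOn f ?_ ?_ hT
  · intro C hC
    simp only [hf, dif_pos (h C hC)]
    exact (h C hC).choose_spec.1
  · intro C hC C' hC' heq
    by_contra hne
    have h1 : f C ∈ C := by simp only [hf, dif_pos (h C hC)]; exact (h C hC).choose_spec.2
    have h2 : f C' ∈ C' := by simp only [hf, dif_pos (h C' hC')]; exact (h C' hC').choose_spec.2
    exact (hdisj C hC C' hC' hne).ne_of_mem h1 (heq ▸ h2) rfl

lemma comps_empty_subsingleton {G : SimpleGraph V} (hG : G.Connected) :
    (comps G (∅ : Set V)).Subsingleton := by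
  rintro C ⟨D, rfl⟩ C' ⟨D', rfl⟩
  suffices hDD : D = D' by rw [hDD]
  obtain ⟨u, hu⟩ := D.exists_rep
  obtain ⟨v, hv⟩ := D'.exists_rep
  have hr : (G.induce ((∅ : Set V)ᶜ)).Reachable u v := by
    have h2 := (hG.preconnected u.1 v.1).map
      (⟨fun x => ⟨x, by simp⟩, fun ha => by simpa⟩ : G →g G.induce ((∅ : Set V)ᶜ))
    exact h2
  rw [← hu, ← hv]
  exact SimpleGraph.ConnectedComponent.sound hr

lemma ncard_le_mul_ncard_image {α β : Type*} {s : Set α} (hs : s.Finite) (f : α → β) (n : ℕ)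
    (hfib : ∀ b, {a ∈ s | f a = b}.ncard ≤ n) : s.ncard ≤ n * (f '' s).ncard := by
  classical
  obtain ⟨s, rfl⟩ : ∃ t : Finset α, (t : Set α) = s := ⟨hs.toFinset, hs.coe_toFinset⟩
  have himg : f '' (s : Set α) = ↑(s.image f) := by simp
  rw [himg, Set.ncard_coe_finset, Set.ncard_coe_finset]
  apply Finset.card_le_mul_card_image
  intro b _
  have := hfib b
  rwa [show {a ∈ (s : Set α) | f a = b} = ↑({a ∈ s | f a = b} : Finset α) by simp,
    Set.ncard_coe_finset] at this

lemma ncard_nonempty_powerset_le {Z : Set V} (hZ : Z.Finite) :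
    {A : Set V | A ⊆ Z ∧ A.Nonempty}.ncard ≤ 2 ^ Z.ncard - 1 := by
  classical
  set f : Set V → Finset V := fun A => hZ.toFinset.filter (· ∈ A) with hf
  have h := Set.ncard_le_ncard_of_injOn (s := {A : Set V | A ⊆ Z ∧ A.Nonempty}) f
    (t := ↑(hZ.toFinset.powerset.erase ∅)) ?_ ?_ (Set.toFinite _)
  · rw [Set.ncard_coe_finset, Finset.card_erase_of_mem (Finset.empty_mem_powerset _),
      Finset.card_powerset, ← Set.ncard_eq_toFinset_card Z hZ] at h
    exact h
  · rintro A ⟨hAZ, x, hx⟩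
    rw [Finset.mem_coe, Finset.mem_erase]
    constructor
    · apply Finset.ne_empty_of_mem (a := x)
      simp [hf, hx, hZ.mem_toFinset.2 (hAZ hx)]
    · exact Finset.mem_powerset.2 (Finset.filter_subset _ _)
  · rintro A ⟨hAZ, -⟩ B ⟨hBZ, -⟩ heq
    ext x
    constructor
    · intro hx
      have : x ∈ f A := by simp [hf, hx, hZ.mem_toFinset.2 (hAZ hx)]
      rw [heq] at this
      simp [hf] at this
      exact this.2
    · intro hx
      have : x ∈ f B := by simp [hf, hx, hZ.mem_toFinset.2 (hBZ hx)]
      rw [← heq] at this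
      simp [hf] at this
      exact this.2

lemma flower_fiber_bound [Finite V] {G : SimpleGraph V} (hG : G.Connected)
    {Vinf Tb : Set V} {q k : ℕ}
    (hfs : ¬ ∃ (Z : Set V) (P : Set (Set V)), FlowerSeparation G Vinf Tb q k Z P)
    {Z : Set V} (hZV : Z ⊆ Vinfᶜ) (hZk : Z.ncard ≤ k) (hZne : Z.Nonempty)
    {N : Set V} {F : Set (Set V)}
    (hF : ∀ C ∈ F, C ∈ comps G Z ∧ (C \ Vinf).Nonempty ∧ (C \ Vinf).ncard ≤ q ∧
      C ∩ Tb = ∅ ∧ setNbhd G C = N) :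
    F.ncard ≤ 2 * q + 1 := by
  by_contra hcon
  push_neg at hcon
  have hFcard : 2 * q + 2 ≤ F.ncard := hcon
  obtain ⟨P, hPF, hPcard⟩ := Set.exists_subset_card_eq (show q + 1 ≤ F.ncard by omega)
  have hFne : F.Nonempty := by
    rw [← Set.ncard_pos (Set.toFinite F)]; omega
  obtain ⟨C₀, hC₀⟩ := hFne
  have hNZ : N ⊆ Z := (hF C₀ hC₀).2.2.2.2 ▸ setNbhd_subset (hF C₀ hC₀).1
  have hNne : N.Nonempty := (hF C₀ hC₀).2.2.2.2 ▸ setNbhd_nonempty hG hZne (hF C₀ hC₀).1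
  have hdisjF : ∀ C ∈ F, ∀ C' ∈ F, C ≠ C' → Disjoint C C' :=
    fun C hC C' hC' hne => comps_disjoint (hF C hC).1 (hF C' hC').1 hne
  apply hfs
  refine ⟨N, P, ?_, ?_, ?_, ?_, ?_, ?_, ?_⟩
  · rw [Nat.one_le_iff_ne_zero, ← Nat.pos_iff_ne_zero, Set.ncard_pos (Set.toFinite N)]
    exact hNne
  · exact le_trans (Set.ncard_le_ncard hNZ (Set.toFinite Z)) hZk
  · rw [Set.eq_empty_iff_forall_notMem]
    exact fun x hx => hZV (hNZ hx.1) hx.2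
  · intro C hC
    exact mem_comps_of (hF C (hPF hC)).1 hNZ (le_of_eq (hF C (hPF hC)).2.2.2.2)
  · -- stalk
    have hR : q + 1 ≤ (F \ P).ncard := by
      rw [Set.ncard_diff hPF (Set.toFinite P)]
      omega
    have hle := card_le_of_points (𝒞 := F \ P) (T := ((Set.univ : Set V) \ (N ∪ ⋃₀ P)) \ Vinf)
      (Set.toFinite _)
      (fun C hC C' hC' hne => hdisjF C hC.1 C' hC'.1 hne) ?_
    · omega
    · rintro C ⟨hCF, hCP⟩
      obtain ⟨x, hxC, hxV⟩ := (hF C hCF).2.1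
      refine ⟨x, ⟨⟨trivial, ?_⟩, hxV⟩, hxC⟩
      rintro (hxN | ⟨C', hC', hxC'⟩)
      · exact comps_subset_compl (hF C hCF).1 hxC (hNZ hxN)
      · have hne : C ≠ C' := fun h => hCP (h ▸ hC')
        exact (hdisjF C hCF C' (hPF hC') hne).ne_of_mem hxC hxC' rfl
  · intro Vi hVi
    exact ⟨(hF Vi (hPF hVi)).2.2.2.1, (hF Vi (hPF hVi)).2.2.1, (hF Vi (hPF hVi)).2.2.2.2⟩
  · -- petals union
    have hle := card_le_of_points (𝒞 := P) (T := (⋃₀ P) \ Vinf) (Set.toFinite _)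
      (fun C hC C' hC' hne => hdisjF C (hPF hC) C' (hPF hC') hne) ?_
    · omega
    · intro C hC
      obtain ⟨x, hxC, hxV⟩ := (hF C (hPF hC)).2.1
      exact ⟨x, ⟨⟨C, hC, hxC⟩, hxV⟩, hxC⟩


/-- If a connected graph `G` with undeletable vertices `Vinf` and border terminals `Tb`
has no `(q,k)`-good node separation and no `(q,k)`-flower separation w.r.t. `Tb`, then
for any set `Z` of at most `k` deletable vertices, `G \ Z` has at most
`(2q+2)(2^k - 1) + |Tb| + 1` connected components containing a vertex outside `Vinf`,
of which at most one has more than `q` vertices outside `Vinf`. -/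
theorem no_separation_component_bound [Fintype V] (G : SimpleGraph V) (hG : G.Connected)
    (Vinf Tb : Set V) (q k : ℕ)
    (hns : ¬ ∃ Z V₁ V₂ : Set V, GoodNodeSeparation G Vinf q k Z V₁ V₂)
    (hfs : ¬ ∃ (Z : Set V) (P : Set (Set V)), FlowerSeparation G Vinf Tb q k Z P)
    (Z : Set V) (hZV : Z ⊆ Vinfᶜ) (hZk : Z.ncard ≤ k) :
    {C ∈ comps G Z | (C \ Vinf).Nonempty}.ncard ≤ (2*q+2) * (2^k - 1) + Tb.ncard + 1 ∧
    {C ∈ comps G Z | q < (C \ Vinf).ncard}.Subsingleton := by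
  classical
  have hZVinf : Z ∩ Vinf = ∅ := by
    rw [Set.eq_empty_iff_forall_notMem]; exact fun x hx => hZV hx.1 hx.2
  have hsub : {C ∈ comps G Z | q < (C \ Vinf).ncard}.Subsingleton := by
    intro C1 h1 C2 h2
    by_contra hne
    exact hns ⟨Z, C1, C2, hZk, hZVinf, h1.1, h2.1, hne, h1.2, h2.2⟩
  refine ⟨?_, hsub⟩
  set S := {C ∈ comps G Z | (C \ Vinf).Nonempty} with hSdef
  rcases Z.eq_empty_or_nonempty with hZe | hZne
  · subst hZe
    have hSsub : S.Subsingleton := fun C h C' h' => comps_empty_subsingleton hG h.1 h'.1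
    rcases hSsub.eq_empty_or_singleton with h | ⟨x, h⟩ <;> rw [h] <;> simp
  · set Sb := {C ∈ S | q < (C \ Vinf).ncard} with hSb
    set St := {C ∈ S | (C ∩ Tb).Nonempty} with hSt
    set Sr := {C ∈ S | (C \ Vinf).ncard ≤ q ∧ C ∩ Tb = ∅} with hSr
    have hcover : S ⊆ Sr ∪ St ∪ Sb := by
      intro C hC
      by_cases hq : q < (C \ Vinf).ncard
      · exact Or.inr ⟨hC, hq⟩
      · rcases (C ∩ Tb).eq_empty_or_nonempty with he | hne
        · exact Or.inl (Or.inl ⟨hC, not_lt.1 hq, he⟩)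
        · exact Or.inl (Or.inr ⟨hC, hne⟩)
    have h1 : Sb.ncard ≤ 1 := by
      have : Sb.Subsingleton := fun C h C' h' =>
        hsub ⟨h.1.1, h.2⟩ ⟨h'.1.1, h'.2⟩
      rcases this.eq_empty_or_singleton with h | ⟨x, h⟩ <;> rw [h] <;> simp
    have h2 : St.ncard ≤ Tb.ncard := by
      apply card_le_of_points (Set.toFinite Tb)
      · exact fun C hC C' hC' hne => comps_disjoint hC.1.1 hC'.1.1 hne
      · rintro C ⟨-, x, hxC, hxT⟩
        exact ⟨x, hxT, hxC⟩
    have h3 : Sr.ncard ≤ (2*q+2) * (2^k - 1) := by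
      have hfib : ∀ N : Set V, {C ∈ Sr | setNbhd G C = N}.ncard ≤ 2*q+2 := by
        intro N
        refine le_trans (flower_fiber_bound hG hfs hZV hZk hZne (N := N) ?_) (by omega)
        rintro C ⟨⟨⟨hcomp, hne⟩, hq, hTb⟩, hN⟩
        exact ⟨hcomp, hne, hq, hTb, hN⟩
      have himg : (setNbhd G '' Sr).ncard ≤ 2^k - 1 := by
        have hsub2 : setNbhd G '' Sr ⊆ {A : Set V | A ⊆ Z ∧ A.Nonempty} := by
          rintro A ⟨C, hC, rfl⟩
          exact ⟨setNbhd_subset hC.1.1, setNbhd_nonempty hG hZne hC.1.1⟩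
        refine le_trans (Set.ncard_le_ncard hsub2 (Set.toFinite _)) ?_
        refine le_trans (ncard_nonempty_powerset_le (Set.toFinite Z)) ?_
        have : 2 ^ Z.ncard ≤ 2 ^ k := Nat.pow_le_pow_right (by norm_num) hZk
        omega
      calc Sr.ncard ≤ (2*q+2) * (setNbhd G '' Sr).ncard :=
            ncard_le_mul_ncard_image (Set.toFinite Sr) _ _ hfib
        _ ≤ (2*q+2) * (2^k - 1) := Nat.mul_le_mul_left _ himg
    calc S.ncard ≤ (Sr ∪ St ∪ Sb).ncard := Set.ncard_le_ncard hcover (Set.toFinite _)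
      _ ≤ (Sr ∪ St).ncard + Sb.ncard := Set.ncard_union_le _ _
      _ ≤ Sr.ncard + St.ncard + Sb.ncard := by
          have := Set.ncard_union_le Sr St
          omega
      _ ≤ (2*q+2) * (2^k - 1) + Tb.ncard + 1 := by omega
end

section
/- Correctness of the bypassing operation for Node Unique Label Cover (forward direction): let I be a Node Unique Label Cover instance, v a vertex with φ_v ≠ ∅, and I' the instance obtained by bypassing v (delete v; for each neighbor u restrict φ_u to labels having a ψ_{uv,v}-preimage in φ_v; for each pair of neighbors u₁, u₂ update the edge u₁u₂ by intersecting with ψ_{vu₂,v} ∘ ψ_{vu₁,u₁}). If (X, Ψ) is a solution to I', then there exists α ∈ Σ such that (X, Ψ ∪ {(v, α)}) is a solution to I. -/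
/-! If `v` has an undeleted neighbor `u₀`, the restricted constraint at `u₀` provides a label
`α ∈ φ v` with `ψ u₀ v (Ψ u₀) α`; give `v` this label. For any other undeleted neighbor `w`, the
composed constraint on the edge `u₀ w` yields `b` with `ψ u₀ v (Ψ u₀) b` and `ψ v w b (Ψ w)`, and
`b = α` because `ψ u₀ v` is a partial permutation. All other constraints of the original instance
are implied by those of the bypassed one. If `v` has no undeleted neighbor, any `α ∈ φ v` works. -/

open scoped Classical

/-- A binary relation `ψ` on an alphabet is a *partial permutation* if every element has
at most one image and at most one preimage. -/
def IsPartialPerm {σ : Type*} (ψ : σ → σ → Prop) : Prop :=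
  (∀ a b c : σ, ψ a b → ψ a c → b = c) ∧ (∀ a b c : σ, ψ a c → ψ b c → a = b)

/-- `(X, Ψ)` is a solution to a Node Unique Label Cover instance: `|X| ≤ k`, the labels
of undeleted vertices satisfy the vertex constraints `φ`, and the labels of each
undeleted edge satisfy its edge constraint `ψ`. -/
def ULCSol {V σ : Type*} (G : SimpleGraph V) (k : ℕ) (φ : V → Set σ)
    (ψ : V → V → σ → σ → Prop) (X : Set V) (Ψ : V → σ) : Prop :=
  X.ncard ≤ k ∧ (∀ v ∉ X, Ψ v ∈ φ v) ∧
  ∀ u ∉ X, ∀ w ∉ X, G.Adj u w → ψ u w (Ψ u) (Ψ w)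

/-- The graph obtained from `G` by bypassing the vertex `v`: `v` becomes isolated and
any two distinct neighbors of `v` become adjacent. -/
def bypassGraph {V : Type*} (G : SimpleGraph V) (v : V) : SimpleGraph V where
  Adj u w := u ≠ v ∧ w ≠ v ∧ u ≠ w ∧ (G.Adj u w ∨ (G.Adj u v ∧ G.Adj v w))
  symm := by
    constructor
    rintro u w ⟨h1, h2, h3, h4⟩
    refine ⟨h2, h1, h3.symm, ?_⟩
    rcases h4 with h | ⟨h5, h6⟩
    · exact Or.inl h.symm
    · exact Or.inr ⟨h6.symm, h5.symm⟩
  loopless := ⟨fun u h => h.2.2.1 rfl⟩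

/-- The vertex constraints after bypassing `v`: the bypassed vertex gets no constraint,
each neighbor `u` of `v` keeps only labels having a `ψ u v`-partner in `φ v`, and
other vertices are unchanged. -/
noncomputable def bypassφ {V σ : Type*} (G : SimpleGraph V) (φ : V → Set σ)
    (ψ : V → V → σ → σ → Prop) (v : V) : V → Set σ := fun u =>
  if u = v then Set.univ
  else if G.Adj u v then φ u ∩ {β | ∃ α ∈ φ v, ψ u v β α}
  else φ u

/-- The edge constraints after bypassing `v`: old constraints are kept, and for each
pair of neighbors of `v` the constraint is additionally intersected with the
composition of the two constraints through `v`. -/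
def bypassψ {V σ : Type*} (G : SimpleGraph V) (ψ : V → V → σ → σ → Prop) (v : V) :
    V → V → σ → σ → Prop := fun u w a c =>
  (G.Adj u w → ψ u w a c) ∧
  ((G.Adj u v ∧ G.Adj v w) → ∃ b : σ, ψ u v a b ∧ ψ v w b c)

section Bypass

variable {V σ : Type*} {G : SimpleGraph V} {φ : V → Set σ} {ψ : V → V → σ → σ → Prop} {v : V}

lemma mem_of_mem_bypassφ {u : V} {β : σ} (hu : u ≠ v) (h : β ∈ bypassφ G φ ψ v u) :
    β ∈ φ u := by
  unfold bypassφ at h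
  rw [if_neg hu] at h
  split_ifs at h
  · exact h.1
  · exact h

lemma exists_partner_of_mem_bypassφ {u : V} {β : σ} (huv : G.Adj u v)
    (h : β ∈ bypassφ G φ ψ v u) : ∃ α ∈ φ v, ψ u v β α := by
  unfold bypassφ at h
  rw [if_neg (G.ne_of_adj huv), if_pos huv] at h
  exact h.2

lemma bypassGraph_adj_of_adj {u w : V} (hu : u ≠ v) (hw : w ≠ v) (huw : G.Adj u w) :
    (bypassGraph G v).Adj u w :=
  ⟨hu, hw, G.ne_of_adj huw, Or.inl huw⟩

lemma bypassGraph_adj_of_adj_of_adj {u w : V} (huw : u ≠ w) (huv : G.Adj u v)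
    (hvw : G.Adj v w) : (bypassGraph G v).Adj u w :=
  ⟨G.ne_of_adj huv, (G.ne_of_adj hvw).symm, huw, Or.inr ⟨huv, hvw⟩⟩

namespace ULCSol

variable {k : ℕ} {X : Set V} {Ψ : V → σ}

lemma bypass_partner_satisfies_edges {u₀ : V} {α : σ}
    (hsymm : ∀ u w a b, ψ u w a b ↔ ψ w u b a)
    (hinj : ∀ a b c, ψ u₀ v a b → ψ u₀ v a c → b = c)
    (hsol : ULCSol (bypassGraph G v) k (bypassφ G φ ψ v) (bypassψ G ψ v) X Ψ)
    (hu₀ : u₀ ∉ X) (hu₀v : G.Adj u₀ v) (hα : ψ u₀ v (Ψ u₀) α) :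
    ∀ w ∉ X, G.Adj v w → ψ v w α (Ψ w) := by
  intro w hw hvw
  rcases eq_or_ne u₀ w with rfl | hu₀w
  · exact (hsymm _ _ _ _).mp hα
  obtain ⟨b, hu₀b, hbw⟩ := (hsol.2.2 u₀ hu₀ w hw
    (bypassGraph_adj_of_adj_of_adj hu₀w hu₀v hvw)).2 ⟨hu₀v, hvw⟩
  exact hinj _ _ _ hu₀b hα ▸ hbw

lemma update_of_bypass [DecidableEq V] (hsymm : ∀ u w a b, ψ u w a b ↔ ψ w u b a)
    (hsol : ULCSol (bypassGraph G v) k (bypassφ G φ ψ v) (bypassψ G ψ v) X Ψ)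
    {α : σ} (hα : α ∈ φ v) (hedge : ∀ w ∉ X, G.Adj v w → ψ v w α (Ψ w)) :
    ULCSol G k φ ψ X (Function.update Ψ v α) := by
  obtain ⟨hcard, hvert, hedges⟩ := hsol
  refine ⟨hcard, fun u hu => ?_, fun u hu w hw huw => ?_⟩
  · rcases eq_or_ne u v with rfl | huv
    · simpa using hα
    · rw [Function.update_of_ne huv]
      exact mem_of_mem_bypassφ huv (hvert u hu)
  · rcases eq_or_ne u v with rfl | huv
    · rw [Function.update_self, Function.update_of_ne (G.ne_of_adj huw).symm]
      exact hedge w hw huw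
    rcases eq_or_ne w v with rfl | hwv
    · rw [Function.update_self, Function.update_of_ne huv]
      exact (hsymm _ _ _ _).mp (hedge u hu huw.symm)
    rw [Function.update_of_ne huv, Function.update_of_ne hwv]
    exact (hedges u hu w hw (bypassGraph_adj_of_adj huv hwv huw)).1 huw

end ULCSol

end Bypass

theorem bypass_forward_general {V σ : Type*} [DecidableEq V]
    (G : SimpleGraph V) (k : ℕ) (φ : V → Set σ) (ψ : V → V → σ → σ → Prop)
    (hsymm : ∀ u w a b, ψ u w a b ↔ ψ w u b a)
    (hpp : ∀ u w, G.Adj u w → IsPartialPerm (ψ u w))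
    (v : V) (hφv : (φ v).Nonempty)
    (X : Set V) (Ψ : V → σ)
    (hsol : ULCSol (bypassGraph G v) k (bypassφ G φ ψ v) (bypassψ G ψ v) X Ψ) :
    ∃ α : σ, ULCSol G k φ ψ X (Function.update Ψ v α) := by
  by_cases hnb : ∃ u₀ ∉ X, G.Adj u₀ v
  · obtain ⟨u₀, hu₀, hu₀v⟩ := hnb
    obtain ⟨α, hαφ, hα⟩ := exists_partner_of_mem_bypassφ hu₀v (hsol.2.1 u₀ hu₀)
    exact ⟨α, hsol.update_of_bypass hsymm hαφ
      (hsol.bypass_partner_satisfies_edges hsymm (hpp u₀ v hu₀v).1 hu₀ hu₀v hα)⟩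
  · obtain ⟨α, hαφ⟩ := hφv
    exact ⟨α, hsol.update_of_bypass hsymm hαφ fun w hw hvw => (hnb ⟨w, hw, hvw.symm⟩).elim⟩

/-- Correctness of bypassing (forward direction): if `(X, Ψ)` is a solution of the
bypassed instance, then for some label `α` of `v`, `(X, Ψ[v ↦ α])` is a solution of the
original instance. -/
theorem bypass_forward {V σ : Type*} [Fintype V] [DecidableEq V]
    (G : SimpleGraph V) (k : ℕ) (φ : V → Set σ) (ψ : V → V → σ → σ → Prop)
    (hsymm : ∀ u w a b, ψ u w a b ↔ ψ w u b a)
    (hpp : ∀ u w, G.Adj u w → IsPartialPerm (ψ u w))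
    (v : V) (hφv : (φ v).Nonempty)
    (X : Set V) (Ψ : V → σ) (hvX : v ∉ X)
    (hsol : ULCSol (bypassGraph G v) k (bypassφ G φ ψ v) (bypassψ G ψ v) X Ψ) :
    ∃ α : σ, ULCSol G k φ ψ X (Function.update Ψ v α) :=
  bypass_forward_general G k φ ψ hsymm hpp v hφv X Ψ hsol
end

section
/- Failure of labeling extension is witnessed by at most two vertices: let G be a graph with Node Unique Label Cover constraints, X₀ ⊆ V(G), A ⊆ V(G), and Ψ^A a labeling of G[A]. If there is no labeling of G[N_{G\X₀}[A]] that equals Ψ^A on A, then there exists a set B ⊆ N_{G\X₀}(A) of size at most two such that there is no labeling of G[A ∪ B] equal to Ψ^A on A. -/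
/-- `Ψ` is a labeling of the set `S`: it satisfies all vertex constraints `φ` on `S`
and all edge constraints `ψ` inside `G[S]`. -/
def LabelsOn {V σ : Type*} (G : SimpleGraph V) (φ : V → Set σ)
    (ψ : V → V → σ → σ → Prop) (S : Set V) (Ψ : V → σ) : Prop :=
  (∀ w ∈ S, Ψ w ∈ φ w) ∧ ∀ u ∈ S, ∀ w ∈ S, G.Adj u w → ψ u w (Ψ u) (Ψ w)

/-- The open neighborhood of `A` in the graph `G` with the vertex set `X₀` removed. -/
def nbhdAvoiding {V : Type*} (G : SimpleGraph V) (X₀ A : Set V) : Set V :=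
  {w | w ∉ A ∧ w ∉ X₀ ∧ ∃ u ∈ A, u ∉ X₀ ∧ G.Adj u w}

def candidateLabels {V σ : Type*} (G : SimpleGraph V) (φ : V → Set σ)
    (ψ : V → V → σ → σ → Prop) (A : Set V) (ΨA : V → σ) (w : V) : Set σ :=
  {a | a ∈ φ w ∧ ∀ u ∈ A, G.Adj u w → ψ u w (ΨA u) a}

section Extension

variable {V σ : Type*} {G : SimpleGraph V} {φ : V → Set σ} {ψ : V → V → σ → σ → Prop}
  {A B : Set V} {ΨA Ψ : V → σ}

theorem subsingleton_candidateLabels {u w : V} (hu : u ∈ A) (hadj : G.Adj u w)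
    (hpp : IsPartialPerm (ψ u w)) : (candidateLabels G φ ψ A ΨA w).Subsingleton :=
  fun _ ha _ hb => hpp.1 _ _ _ (ha.2 u hu hadj) (hb.2 u hu hadj)

theorem LabelsOn.mem_candidateLabels (hΨ : LabelsOn G φ ψ (A ∪ B) Ψ) (hEq : Set.EqOn Ψ ΨA A)
    {w : V} (hw : w ∈ B) : Ψ w ∈ candidateLabels G φ ψ A ΨA w := by
  refine ⟨hΨ.1 w (Or.inr hw), fun u hu hadj => ?_⟩
  simpa only [hEq hu] using hΨ.2 u (Or.inl hu) w (Or.inr hw) hadj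

theorem labelsOn_union_of_mem_candidateLabels (hsymm : ∀ u w a b, ψ u w a b ↔ ψ w u b a)
    (hΨA : LabelsOn G φ ψ A ΨA) (hEq : Set.EqOn Ψ ΨA A)
    (hcand : ∀ w ∈ B, Ψ w ∈ candidateLabels G φ ψ A ΨA w)
    (hB : ∀ w₁ ∈ B, ∀ w₂ ∈ B, G.Adj w₁ w₂ → ψ w₁ w₂ (Ψ w₁) (Ψ w₂)) :
    LabelsOn G φ ψ (A ∪ B) Ψ := by
  refine ⟨?_, ?_⟩
  · rintro w (hw | hw)
    · exact hEq hw ▸ hΨA.1 w hw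
    · exact (hcand w hw).1
  · rintro u (hu | hu) w (hw | hw) hadj
    · rw [hEq hu, hEq hw]; exact hΨA.2 u hu w hw hadj
    · rw [hEq hu]; exact (hcand w hw).2 u hu hadj
    · rw [hEq hw, hsymm]; exact (hcand u hu).2 w hw hadj.symm
    · exact hB u hu w hw hadj

theorem exists_eqOn_forall_mem_candidateLabels (hAB : Disjoint A B)
    (hne : ∀ w ∈ B, (candidateLabels G φ ψ A ΨA w).Nonempty) :
    ∃ Ψ : V → σ, Set.EqOn Ψ ΨA A ∧ ∀ w ∈ B, Ψ w ∈ candidateLabels G φ ψ A ΨA w := by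
  classical
  have : ∀ w, ∃ a, w ∈ B → a ∈ candidateLabels G φ ψ A ΨA w := fun w =>
    if hw : w ∈ B then (hne w hw).imp fun _ ha _ => ha else ⟨ΨA w, fun h => absurd h hw⟩
  choose f hf using this
  refine ⟨B.piecewise f ΨA, fun v hv => ?_, fun w hw => ?_⟩
  · exact B.piecewise_eq_of_notMem f ΨA (hAB.notMem_of_mem_left hv)
  · simpa only [B.piecewise_eq_of_mem f ΨA hw] using hf w hw

theorem not_exists_labelsOn_union_singleton {w : V}
    (hw : candidateLabels G φ ψ A ΨA w = ∅) :
    ¬ ∃ Ψ : V → σ, LabelsOn G φ ψ (A ∪ {w}) Ψ ∧ Set.EqOn Ψ ΨA A := by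
  rintro ⟨Ψ, hΨ, hEq⟩
  simpa only [hw, Set.mem_empty_iff_false] using hΨ.mem_candidateLabels hEq rfl

theorem not_exists_labelsOn_union_pair {w₁ w₂ : V}
    (hsub₁ : (candidateLabels G φ ψ A ΨA w₁).Subsingleton)
    (hsub₂ : (candidateLabels G φ ψ A ΨA w₂).Subsingleton)
    (h₁ : Ψ w₁ ∈ candidateLabels G φ ψ A ΨA w₁) (h₂ : Ψ w₂ ∈ candidateLabels G φ ψ A ΨA w₂)
    (hadj : G.Adj w₁ w₂) (hbad : ¬ ψ w₁ w₂ (Ψ w₁) (Ψ w₂)) :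
    ¬ ∃ Ψ' : V → σ, LabelsOn G φ ψ (A ∪ {w₁, w₂}) Ψ' ∧ Set.EqOn Ψ' ΨA A := by
  rintro ⟨Ψ', hΨ', hEq⟩
  have e₁ : Ψ' w₁ = Ψ w₁ := hsub₁ (hΨ'.mem_candidateLabels hEq (by simp)) h₁
  have e₂ : Ψ' w₂ = Ψ w₂ := hsub₂ (hΨ'.mem_candidateLabels hEq (by simp)) h₂
  exact hbad (e₁ ▸ e₂ ▸ hΨ'.2 w₁ (Or.inr (by simp)) w₂ (Or.inr (by simp)) hadj)

theorem subsingleton_candidateLabels_of_mem_nbhdAvoiding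
    (hpp : ∀ u w, G.Adj u w → IsPartialPerm (ψ u w)) {X₀ : Set V} {w : V}
    (hw : w ∈ nbhdAvoiding G X₀ A) : (candidateLabels G φ ψ A ΨA w).Subsingleton :=
  let ⟨_, _, u, hu, _, hadj⟩ := hw
  subsingleton_candidateLabels hu hadj (hpp u w hadj)

theorem disjoint_nbhdAvoiding (G : SimpleGraph V) (X₀ A : Set V) :
    Disjoint A (nbhdAvoiding G X₀ A) :=
  Set.disjoint_right.2 fun _ hw => hw.1

end Extension

theorem extension_failure_two_witnesses_general {V σ : Type*}
    (G : SimpleGraph V) (φ : V → Set σ) (ψ : V → V → σ → σ → Prop)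
    (hsymm : ∀ u w a b, ψ u w a b ↔ ψ w u b a)
    (hpp : ∀ u w, G.Adj u w → IsPartialPerm (ψ u w))
    (X₀ A : Set V) (ΨA : V → σ) (hΨA : LabelsOn G φ ψ A ΨA)
    (hnoext : ¬ ∃ Ψ : V → σ,
      LabelsOn G φ ψ (A ∪ nbhdAvoiding G X₀ A) Ψ ∧ Set.EqOn Ψ ΨA A) :
    ∃ B ⊆ nbhdAvoiding G X₀ A, B.ncard ≤ 2 ∧
      ¬ ∃ Ψ : V → σ, LabelsOn G φ ψ (A ∪ B) Ψ ∧ Set.EqOn Ψ ΨA A := by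
  set N := nbhdAvoiding G X₀ A
  by_cases hempty : ∃ w ∈ N, candidateLabels G φ ψ A ΨA w = ∅
  · obtain ⟨w, hw, hcand⟩ := hempty
    exact ⟨{w}, Set.singleton_subset_iff.2 hw, by simp,
      not_exists_labelsOn_union_singleton hcand⟩
  push Not at hempty
  obtain ⟨Ψ, hEq, hcand⟩ := exists_eqOn_forall_mem_candidateLabels
    (disjoint_nbhdAvoiding G X₀ A) hempty
  obtain ⟨w₁, hw₁, w₂, hw₂, hadj, hbad⟩ :
      ∃ w₁ ∈ N, ∃ w₂ ∈ N, G.Adj w₁ w₂ ∧ ¬ ψ w₁ w₂ (Ψ w₁) (Ψ w₂) := by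
    by_contra! hgood
    exact hnoext ⟨Ψ, labelsOn_union_of_mem_candidateLabels hsymm hΨA hEq hcand hgood, hEq⟩
  refine ⟨{w₁, w₂}, Set.insert_subset hw₁ (Set.singleton_subset_iff.2 hw₂),
    (Set.ncard_insert_le _ _).trans (by simp), ?_⟩
  exact not_exists_labelsOn_union_pair
    (subsingleton_candidateLabels_of_mem_nbhdAvoiding hpp hw₁)
    (subsingleton_candidateLabels_of_mem_nbhdAvoiding hpp hw₂)
    (hcand w₁ hw₁) (hcand w₂ hw₂) hadj hbad

/-- Failure of labeling extension is witnessed by at most two vertices: if a labeling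
`ΨA` of `G[A]` cannot be extended to a labeling of the closed neighborhood of `A` in
`G \ X₀`, then there are at most two vertices `B` in the open neighborhood such that
`ΨA` cannot even be extended to a labeling of `G[A ∪ B]`. -/
theorem extension_failure_two_witnesses {V σ : Type*} [Fintype V]
    (G : SimpleGraph V) (φ : V → Set σ) (ψ : V → V → σ → σ → Prop)
    (hsymm : ∀ u w a b, ψ u w a b ↔ ψ w u b a)
    (hpp : ∀ u w, G.Adj u w → IsPartialPerm (ψ u w))
    (X₀ A : Set V) (ΨA : V → σ) (hΨA : LabelsOn G φ ψ A ΨA)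
    (hnoext : ¬ ∃ Ψ : V → σ,
      LabelsOn G φ ψ (A ∪ nbhdAvoiding G X₀ A) Ψ ∧ Set.EqOn Ψ ΨA A) :
    ∃ B ⊆ nbhdAvoiding G X₀ A, B.ncard ≤ 2 ∧
      ¬ ∃ Ψ : V → σ, LabelsOn G φ ψ (A ∪ B) Ψ ∧ Set.EqOn Ψ ΨA A :=
  extension_failure_two_witnesses_general G φ ψ hsymm hpp X₀ A ΨA hΨA hnoext
end

section
/- Forced deletion via many disjoint paths to inequivalent terminals (Node Multiway Cut-Uncut): let (G, T, R, k) be an instance with terminal set T and equivalence relation R on T. Suppose v ∈ V(G) \ T and there exist k+2 simple paths P₁, ..., P_{k+2} in G, each starting at v and ending at a terminal v_i ∈ T, with pairwise disjoint vertex sets except for the shared vertex v, and with (v_i, v_j) ∉ R for all i ≠ j. Then every solution X (a set of at most k nonterminal vertices whose removal makes terminals lie in the same component exactly according to R) contains v. -/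
variable {V : Type*}

/-- The graph `G` with the vertex set `X` (effectively) removed: only edges with both
endpoints outside `X` are kept, so the vertices of `X` become isolated. -/
def delV (G : SimpleGraph V) (X : Set V) : SimpleGraph V where
  Adj u w := G.Adj u w ∧ u ∉ X ∧ w ∉ X
  symm := by constructor; rintro u w ⟨h, hu, hw⟩; exact ⟨h.symm, hw, hu⟩
  loopless := by constructor; rintro u ⟨h, -, -⟩; exact G.loopless.irrefl u h

/-- `X` is a solution to the Node Multiway Cut-Uncut instance `(G, T, R, k)`:
`X` is a set of at most `k` nonterminal vertices and two terminals lie in the same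
connected component of `G \ X` exactly when they are `R`-equivalent. -/
def NMWCUSol (G : SimpleGraph V) (T : Set V) (R : V → V → Prop) (k : ℕ)
    (X : Set V) : Prop :=
  X ⊆ Tᶜ ∧ X.ncard ≤ k ∧ ∀ u ∈ T, ∀ v ∈ T, ((delV G X).Reachable u v ↔ R u v)

/-- The vertex `v` admits `k+2` paths to terminals of pairwise `R`-inequivalent classes,
pairwise vertex-disjoint except for the shared endpoint `v`. -/
def ManyPaths (G : SimpleGraph V) (T : Set V) (R : V → V → Prop) (k : ℕ)
    (v : V) : Prop :=
  ∃ t : Fin (k + 2) → V, (∀ i, t i ∈ T) ∧ (∀ i j, i ≠ j → ¬ R (t i) (t j)) ∧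
    ∃ P : (i : Fin (k + 2)) → G.Walk v (t i),
      (∀ i, (P i).IsPath) ∧
      ∀ i j, i ≠ j → ∀ x, x ∈ (P i).support → x ∈ (P j).support → x = v

/-! A solution deletes at most `k` vertices. If it kept `v`, each deleted vertex could block
at most one of the `k + 2` paths, since distinct paths meet only in `v`; two paths would
survive and join two `R`-inequivalent terminals through `v` in `G \ X`. -/

theorem SimpleGraph.Walk.reachable_delV {G : SimpleGraph V} {X : Set V} {u w : V}
    (p : G.Walk u w) (hp : ∀ x ∈ p.support, x ∉ X) : (delV G X).Reachable u w := by
  induction p with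
  | nil => rfl
  | cons h p ih =>
    simp only [support_cons, List.mem_cons, forall_eq_or_imp] at hp
    have hadj : (delV G X).Adj _ _ := ⟨h, hp.1, hp.2 _ p.start_mem_support⟩
    exact hadj.reachable.trans (ih hp.2)

theorem Set.ncard_setOf_inter_nonempty_le {ι α : Type*} {S : ι → Set α} {X : Set α}
    (hX : X.Finite) (hS : Pairwise fun i j => Disjoint (S i ∩ X) (S j ∩ X)) :
    {i | (S i ∩ X).Nonempty}.ncard ≤ X.ncard := by
  rcases isEmpty_or_nonempty α with hα | hα
  · simp [X.eq_empty_of_isEmpty]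
  choose! f hf using fun i (hi : i ∈ {i | (S i ∩ X).Nonempty}) => hi
  refine ncard_le_ncard_of_injOn f (fun i hi => (hf i hi).2) (fun i hi j hj hij => ?_) hX
  by_contra hne
  exact disjoint_left.1 (hS hne) (hf i hi) (hij ▸ hf j hj)

theorem Set.exists_pair_notMem_of_ncard_add_two_le {ι : Type*} [Finite ι] {s : Set ι}
    (hs : s.ncard + 2 ≤ Nat.card ι) : ∃ i j, i ∉ s ∧ j ∉ s ∧ i ≠ j := by
  have hcompl : 1 < sᶜ.ncard := by
    have := ncard_add_ncard_compl s
    omega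
  exact (one_lt_ncard_iff).1 hcompl

theorem manyPaths_forces_deletion_general [Fintype V] (G : SimpleGraph V)
    (T : Set V) (R : V → V → Prop) (k : ℕ)
    (v : V) (hmany : ManyPaths G T R k v) :
    ∀ X : Set V, NMWCUSol G T R k X → v ∈ X := by
  rintro X ⟨-, hXk, hsol⟩
  by_contra hvX
  obtain ⟨t, htT, htR, P, -, hPdisj⟩ := hmany
  set blocked := {i | ({x | x ∈ (P i).support} ∩ X).Nonempty}
  have hblocked : blocked.ncard ≤ k := by
    refine (Set.ncard_setOf_inter_nonempty_le X.toFinite fun i j hij => ?_).trans hXk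
    exact Set.disjoint_left.2 fun x hx hx' => hvX (hPdisj i j hij x hx.1 hx'.1 ▸ hx.2)
  obtain ⟨i, j, hi, hj, hij⟩ :=
    Set.exists_pair_notMem_of_ncard_add_two_le (s := blocked) (by simpa using hblocked)
  have avoids : ∀ m ∉ blocked, ∀ x ∈ (P m).support, x ∉ X :=
    fun m hm x hx hxX => hm ⟨x, hx, hxX⟩
  have hreach : (delV G X).Reachable (t i) (t j) :=
    ((P i).reachable_delV (avoids i hi)).symm.trans ((P j).reachable_delV (avoids j hj))
  exact htR i j hij ((hsol _ (htT i) _ (htT j)).1 hreach)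

/-- Forced deletion via many disjoint paths to inequivalent terminals: if a nonterminal
vertex `v` has `k+2` paths to pairwise `R`-inequivalent terminals, disjoint except at
`v`, then every solution of the Node Multiway Cut-Uncut instance contains `v`. -/
theorem manyPaths_forces_deletion [Fintype V] (G : SimpleGraph V)
    (T : Set V) (R : V → V → Prop) (k : ℕ)
    (hrefl : ∀ t ∈ T, R t t)
    (hsym : ∀ s ∈ T, ∀ t ∈ T, R s t → R t s)
    (htrans : ∀ s ∈ T, ∀ t ∈ T, ∀ r ∈ T, R s t → R t r → R s r)
    (v : V) (hv : v ∉ T) (hmany : ManyPaths G T R k v) :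
    ∀ X : Set V, NMWCUSol G T R k X → v ∈ X :=
  manyPaths_forces_deletion_general G T R k v hmany
end

section
/- Deletion of a redundant twin terminal preserves the solution set: let (G, T, R, k) be a Node Multiway Cut-Uncut instance and u₁, u₂, u₃ ∈ T three distinct terminals of the same R-equivalence class, pairwise nonadjacent, with N_G(u₁) = N_G(u₂) = N_G(u₃) ⊆ V(G) \ T. Let I' be obtained by deleting u₃ (and all pairs involving u₃ from R). Then the set of solutions of I' equals the set of solutions of I. -/
variable {V : Type*}

/-!
If `u₁` and `u₃` are twins and `u₁ ∉ X`, then folding `u₃` onto `u₁` is a graph homomorphism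
`G \ X → G \ u₃ \ X`, so deleting `u₃` changes no reachability between the other vertices. Hence
the two instances impose the same constraints on the terminals other than `u₃`. In the converse
direction, `u₁` reaches `u₂ ≠ u₁` in `G \ u₃ \ X`, so it has a neighbour `w ∉ X`, which is also a
neighbour of `u₃`; thus `u₃` and `u₁` lie in the same component of `G \ X` as well as in the same
`R`-class, and the constraints involving `u₃` are copies of those involving `u₁`.
-/

section PartialEquivalence

variable {α : Type*} {S : Set α} {r s : α → α → Prop}

theorem rel_left_iff_of_rel (hsymm : ∀ x ∈ S, ∀ y ∈ S, r x y → r y x)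
    (htrans : ∀ x ∈ S, ∀ y ∈ S, ∀ z ∈ S, r x y → r y z → r x z)
    {a b : α} (ha : a ∈ S) (hb : b ∈ S) (hab : r a b) {x : α} (hx : x ∈ S) :
    r a x ↔ r b x :=
  ⟨htrans b hb a ha x hx (hsymm a ha b hb hab), htrans a ha b hb x hx hab⟩

theorem rel_right_iff_of_rel (hsymm : ∀ x ∈ S, ∀ y ∈ S, r x y → r y x)
    (htrans : ∀ x ∈ S, ∀ y ∈ S, ∀ z ∈ S, r x y → r y z → r x z)
    {a b : α} (ha : a ∈ S) (hb : b ∈ S) (hab : r a b) {x : α} (hx : x ∈ S) :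
    r x a ↔ r x b :=
  ⟨fun h => htrans x hx a ha b hb h hab, fun h => htrans x hx b hb a ha h (hsymm a ha b hb hab)⟩

theorem forall_rel_iff_of_forall_ne (hr_symm : ∀ x ∈ S, ∀ y ∈ S, r x y → r y x)
    (hr_trans : ∀ x ∈ S, ∀ y ∈ S, ∀ z ∈ S, r x y → r y z → r x z)
    (hs_symm : ∀ x ∈ S, ∀ y ∈ S, s x y → s y x)
    (hs_trans : ∀ x ∈ S, ∀ y ∈ S, ∀ z ∈ S, s x y → s y z → s x z)
    {a b : α} (ha : a ∈ S) (hb : b ∈ S) (hne : a ≠ b) (hr : r a b) (hs : s a b)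
    (h : ∀ x ∈ S, x ≠ b → ∀ y ∈ S, y ≠ b → (r x y ↔ s x y)) :
    ∀ x ∈ S, ∀ y ∈ S, r x y ↔ s x y := by
  have h_left : ∀ x ∈ S, x ≠ b → ∀ y ∈ S, r x y ↔ s x y := by
    intro x hx hxb y hy
    obtain rfl | hyb := eq_or_ne y b
    · rw [← rel_right_iff_of_rel hr_symm hr_trans ha hy hr hx,
        ← rel_right_iff_of_rel hs_symm hs_trans ha hy hs hx]
      exact h x hx hxb a ha hne
    · exact h x hx hxb y hy hyb
  intro x hx y hy
  obtain rfl | hxb := eq_or_ne x b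
  · rw [← rel_left_iff_of_rel hr_symm hr_trans ha hx hr hy,
      ← rel_left_iff_of_rel hs_symm hs_trans ha hx hs hy]
    exact h_left a ha hne y hy
  · exact h_left x hx hxb y hy

end PartialEquivalence

section TwinDeletion

variable {G : SimpleGraph V} {X : Set V}

theorem delV_mono_left {H : SimpleGraph V} (hHG : H ≤ G) : delV H X ≤ delV G X :=
  fun _ _ ⟨hadj, hu, hw⟩ => ⟨hHG hadj, hu, hw⟩

theorem delV_le (X : Set V) : delV G X ≤ G := fun _ _ h => h.1

def foldTwinHom [DecidableEq V] {a c : V} (hac : a ≠ c) (haX : a ∉ X)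
    (hN : G.neighborSet a = G.neighborSet c) : delV G X →g delV (delV G {c}) X where
  toFun v := if v = c then a else v
  map_rel' := by
    have hNa : ∀ {v}, G.Adj c v → G.Adj a v := fun {v} h => (hN ▸ h : v ∈ G.neighborSet a)
    rintro p q ⟨hpq, hp, hq⟩
    by_cases hpc : p = c <;> by_cases hqc : q = c <;> subst_vars
    · exact (G.irrefl hpq).elim
    · simp only [if_pos, if_neg hqc]
      exact ⟨⟨hNa hpq, hac, hqc⟩, haX, hq⟩
    · simp only [if_pos, if_neg hpc]
      exact ⟨⟨(hNa hpq.symm).symm, hpc, hac⟩, hp, haX⟩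
    · simp only [if_neg hpc, if_neg hqc]
      exact ⟨⟨hpq, hpc, hqc⟩, hp, hq⟩

theorem reachable_delV_delV_singleton_iff {a c : V} (hac : a ≠ c) (haX : a ∉ X)
    (hN : G.neighborSet a = G.neighborSet c) {x y : V} (hx : x ≠ c) (hy : y ≠ c) :
    (delV (delV G {c}) X).Reachable x y ↔ (delV G X).Reachable x y := by
  classical
  refine ⟨fun h => h.mono (delV_mono_left (delV_le _)), fun h => ?_⟩
  simpa only [foldTwinHom, RelHom.coeFn_mk, if_neg hx, if_neg hy] using
    h.map (foldTwinHom hac haX hN)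

theorem exists_adj_of_reachable_of_ne {H : SimpleGraph V} {x y : V} (h : H.Reachable x y)
    (hne : x ≠ y) : ∃ w, H.Adj x w := by
  obtain ⟨p⟩ := h
  exact ⟨p.snd, p.adj_snd (SimpleGraph.Walk.not_nil_of_ne hne)⟩

theorem reachable_delV_of_neighborSet_eq {a c w : V} (hcX : c ∉ X)
    (hN : G.neighborSet a = G.neighborSet c) (haw : (delV G X).Adj a w) :
    (delV G X).Reachable a c := by
  have hcw : (delV G X).Adj c w := ⟨(hN ▸ haw.1 : w ∈ G.neighborSet c), hcX, haw.2.2⟩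
  exact haw.reachable.trans hcw.symm.reachable

end TwinDeletion

theorem twin_terminal_deletion_preserves_solutions_general (G : SimpleGraph V)
    (T : Set V) (R : V → V → Prop) (k : ℕ)
    (hsym : ∀ s ∈ T, ∀ t ∈ T, R s t → R t s)
    (htrans : ∀ s ∈ T, ∀ t ∈ T, ∀ r ∈ T, R s t → R t r → R s r)
    (u₁ u₂ u₃ : V) (h1 : u₁ ∈ T) (h2 : u₂ ∈ T) (h3 : u₃ ∈ T)
    (h12 : u₁ ≠ u₂) (h13 : u₁ ≠ u₃) (h23 : u₂ ≠ u₃)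
    (hR12 : R u₁ u₂) (hR13 : R u₁ u₃)
    (hN13 : G.neighborSet u₁ = G.neighborSet u₃) :
    ∀ X : Set V, NMWCUSol G T R k X ↔
      (u₃ ∉ X ∧ NMWCUSol (delV G {u₃}) (T \ {u₃}) R k X) := by
  intro X
  constructor
  · rintro ⟨hXT, hk, hreach⟩
    refine ⟨fun h => hXT h h3, fun x hx hxT => hXT hx hxT.1, hk, ?_⟩
    rintro u ⟨huT, hu3 : u ≠ u₃⟩ v ⟨hvT, hv3 : v ≠ u₃⟩
    rw [reachable_delV_delV_singleton_iff h13 (fun h => hXT h h1) hN13 hu3 hv3]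
    exact hreach u huT v hvT
  · rintro ⟨hu3X, hXT', hk, hreach'⟩
    have hXT : X ⊆ Tᶜ := fun x hx hxT =>
      hXT' hx ⟨hxT, fun (hx3 : x = u₃) => hu3X (hx3 ▸ hx)⟩
    have hu1X : u₁ ∉ X := fun h => hXT h h1
    have hreach : ∀ u ∈ T, u ≠ u₃ → ∀ v ∈ T, v ≠ u₃ → ((delV G X).Reachable u v ↔ R u v) :=
      fun u hu hu3 v hv hv3 => by
        rw [← reachable_delV_delV_singleton_iff h13 hu1X hN13 hu3 hv3]
        exact hreach' u ⟨hu, hu3⟩ v ⟨hv, hv3⟩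
    obtain ⟨w, hw⟩ := exists_adj_of_reachable_of_ne ((hreach u₁ h1 h13 u₂ h2 h23).mpr hR12) h12
    refine ⟨hXT, hk, forall_rel_iff_of_forall_ne (fun _ _ _ _ => .symm) (fun _ _ _ _ _ _ => .trans)
      hsym htrans h1 h3 h13 (reachable_delV_of_neighborSet_eq hu3X hN13 hw) hR13 hreach⟩

/-- Deletion of a redundant twin terminal preserves the solution set: if `u₁, u₂, u₃`
are three distinct pairwise nonadjacent terminals of the same `R`-class with identical
neighborhoods consisting of nonterminals only, then the solutions of the original
instance are exactly the solutions of the instance obtained by deleting the terminal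
`u₃` (whose solutions avoid `u₃` and live in the graph with `u₃` removed). -/
theorem twin_terminal_deletion_preserves_solutions [Fintype V] (G : SimpleGraph V)
    (T : Set V) (R : V → V → Prop) (k : ℕ)
    (hrefl : ∀ t ∈ T, R t t)
    (hsym : ∀ s ∈ T, ∀ t ∈ T, R s t → R t s)
    (htrans : ∀ s ∈ T, ∀ t ∈ T, ∀ r ∈ T, R s t → R t r → R s r)
    (u₁ u₂ u₃ : V) (h1 : u₁ ∈ T) (h2 : u₂ ∈ T) (h3 : u₃ ∈ T)
    (h12 : u₁ ≠ u₂) (h13 : u₁ ≠ u₃) (h23 : u₂ ≠ u₃)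
    (hR12 : R u₁ u₂) (hR13 : R u₁ u₃) (hR23 : R u₂ u₃)
    (hadj12 : ¬ G.Adj u₁ u₂) (hadj13 : ¬ G.Adj u₁ u₃) (hadj23 : ¬ G.Adj u₂ u₃)
    (hN12 : G.neighborSet u₁ = G.neighborSet u₂)
    (hN13 : G.neighborSet u₁ = G.neighborSet u₃)
    (hNT : G.neighborSet u₁ ⊆ Tᶜ) :
    ∀ X : Set V, NMWCUSol G T R k X ↔
      (u₃ ∉ X ∧ NMWCUSol (delV G {u₃}) (T \ {u₃}) R k X) :=
  twin_terminal_deletion_preserves_solutions_general G T R k hsym htrans u₁ u₂ u₃ h1 h2 h3 h12 h13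
    h23 hR12 hR13 hN13
end
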